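/- arXiv:2604.10728 — 11 statements merged into one kernel-verified Lean document; each statement's English description precedes it below -/
import Mathlib

section
/- Let X = ℝ, let G > 0, a ∈ ℝ, and let f(x) = G·|x − a|. Consider AdaGrad (the projected subgradient method x^{k+1} = x^k − h_k·g^k with stepsizes h_k = h/√(G² + ∑_{i=1}^{k} (g^i)²) for some fixed h > 0), started at x¹ = a, where the subgradients are chosen as g^k = 0 for k = 1, …, N−1 (valid since ∂f(a) = [−G, G]) and g^N = G. Then x^k = a for all k = 1, …, N, the last iterate is x^{N+1} = a − h/√2, and consequently f(x^{N+1}) − min_{x∈ℝ} f(x) = G·h/√2. In particular, for any fixed h > 0 the last iterate of AdaGrad fails to converge: f(x^{N+1}) − f(x*) ≥ G·h/√2 for every N ≥ 1. -/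
open Finset

/-- Proposition 1 (bad example): with a fixed base stepsize `h > 0`, AdaGrad on
`f(x) = G·|x − a|` started at `x¹ = a`, with subgradients `g^k = 0` for
`k = 1, …, N−1` and `g^N = G`, stays at `a` until iteration `N`, ends at
`x^{N+1} = a − h/√2`, and hence its last-iterate suboptimality is exactly
`G·h/√2 (≥ G·h/√2)` for every `N ≥ 1`. -/
theorem adagrad_fixed_stepsize_no_convergence
    (G a h : ℝ) (hG : 0 < G) (hh : 0 < h) (N : ℕ) (hN : 1 ≤ N)
    (x g : ℕ → ℝ)
    (hx1 : x 1 = a)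
    (hg0 : ∀ k, 1 ≤ k → k ≤ N - 1 → g k = 0)
    (hgN : g N = G)
    (hupd : ∀ k, 1 ≤ k → k ≤ N →
      x (k + 1) = x k - (h / Real.sqrt (G ^ 2 + ∑ i ∈ Icc 1 k, (g i) ^ 2)) * g k) :
    (∀ k, 1 ≤ k → k ≤ N → x k = a) ∧
    x (N + 1) = a - h / Real.sqrt 2 ∧
    G * |x (N + 1) - a| - (⨅ y : ℝ, G * |y - a|) = G * h / Real.sqrt 2 ∧
    G * |x (N + 1) - a| - (⨅ y : ℝ, G * |y - a|) ≥ G * h / Real.sqrt 2 := by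
  have hxk : ∀ k, 1 ≤ k → k ≤ N → x k = a := by
    intro k hk1 hkN
    induction k with
    | zero => omega
    | succ n ih =>
      rcases Nat.eq_or_lt_of_le hk1 with h1 | h1
      · rw [← h1]; exact hx1
      · -- n + 1 ≥ 2, so n ≥ 1
        have hn1 : 1 ≤ n := by omega
        have hnN : n ≤ N := by omega
        have hxn : x n = a := ih hn1 (by omega)
        have hgn : g n = 0 := hg0 n hn1 (by omega)
        rw [hupd n hn1 hnN, hgn, hxn]; ring
  have hsum : ∑ i ∈ Icc 1 N, (g i) ^ 2 = G ^ 2 := by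
    have : ∀ i ∈ Icc 1 N, (g i) ^ 2 = if i = N then G ^ 2 else 0 := by
      intro i hi
      simp only [mem_Icc] at hi
      by_cases hiN : i = N
      · simp [hiN, hgN]
      · have := hg0 i hi.1 (by omega)
        simp [hiN, this]
    rw [Finset.sum_congr rfl this, Finset.sum_ite_eq' (Icc 1 N) N fun _ => G ^ 2]
    simp [hN]
  have hxN1 : x (N + 1) = a - h / Real.sqrt 2 := by
    rw [hupd N hN le_rfl, hxk N hN le_rfl, hgN, hsum]
    have h2G : G ^ 2 + G ^ 2 = 2 * G ^ 2 := by ring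
    rw [h2G, show (2 : ℝ) * G ^ 2 = 2 * G ^ 2 from rfl,
      Real.sqrt_mul (by norm_num : (0:ℝ) ≤ 2), Real.sqrt_sq hG.le]
    have hs2 : Real.sqrt 2 ≠ 0 := by positivity
    field_simp
  have hinf : (⨅ y : ℝ, G * |y - a|) = 0 := by
    apply le_antisymm
    · have := ciInf_le (f := fun y : ℝ => G * |y - a|)
        ⟨0, by rintro z ⟨y, rfl⟩; positivity⟩ a
      simpa using this
    · apply le_ciInf
      intro y; positivity
  have habs : |x (N + 1) - a| = h / Real.sqrt 2 := by
    rw [hxN1]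
    rw [show a - h / Real.sqrt 2 - a = -(h / Real.sqrt 2) by ring, abs_neg,
      abs_of_pos (by positivity)]
  refine ⟨hxk, hxN1, ?_, ?_⟩
  · rw [hinf, habs]; ring
  · rw [hinf, habs]; rw [ge_iff_le]; apply le_of_eq; ring
end

section
/- Let X ⊆ ℝ^d be a nonempty closed convex set, f : ℝ^d → ℝ convex on X, and x̂ ∈ X. Let h₁, …, h_N > 0 and h_{N+1} > 0, and let the projected subgradient iterates be x^{k+1} = P_X(x^k − h_k·g^k) for k = 1, …, N, starting at x¹ ∈ X, where g^k is a subgradient of f at x^k; let g^{N+1} also be a subgradient of f at x^{N+1}. Let 0 ≤ v₀ ≤ v₁ ≤ … ≤ v_N ≤ v_{N+1} be real numbers, and define c_k = h_k·v_k² − (v_k − v_{k−1})·∑_{i=k}^{N+1} h_i·v_i for k = 1, …, N+1. Then ∑_{k=1}^{N+1} c_k·(f(x^k) − f(x̂)) ≤ (v₀²/2)·‖x¹ − x̂‖² + (1/2)·∑_{k=1}^{N+1} h_k²·v_k²·‖g^k‖². -/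
/-!
Compare the iterate `x k` not with `x̂` but with the moving anchor
`z k = v 0 • x̂ + ∑_{1 ≤ j ≤ k} (v j - v (j - 1)) • x j`: a nonnegative combination of points of
`X` with total weight `v k`, hence `z k ∈ v k • X`. The subgradient inequality at `x k`, tested
against the points making up `z k`, gives
`⟪g k, v k • x k - z k⟫ ≥ v k (f (x k) - f x̂) - ∑_{j ≤ k} (v j - v (j - 1)) (f (x j) - f x̂)`,
and summing with weights `h k * v k` and exchanging the order of summation yields the left-hand
side. Since `v (k + 1) • x (k + 1) - z (k + 1) = v k • x (k + 1) - z k`, the projection step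
compared with `z k / v k ∈ X` makes `‖v k • x k - z k‖ ^ 2 / 2` telescope, exactly as in the
classical analysis of the subgradient method, down to `v 0 ^ 2 / 2 * ‖x 1 - x̂‖ ^ 2`.
-/

open Finset
open scoped RealInnerProductSpace Pointwise

theorem sum_Icc_one_sub_pred {G : Type*} [AddCommGroup G] (v : ℕ → G) (n : ℕ) :
    ∑ j ∈ Icc 1 n, (v j - v (j - 1)) = v n - v 0 := by
  induction n with
  | zero => simp
  | succ n ih => rw [sum_Icc_succ_top (by omega), ih, Nat.add_sub_cancel]; abel

theorem nonneg_of_forall_pred_le {v : ℕ → ℝ} {n : ℕ} (hv0 : 0 ≤ v 0)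
    (hv : ∀ j ∈ Icc 1 n, v (j - 1) ≤ v j) : 0 ≤ v n := by
  rw [← sub_add_cancel (v n) (v 0), ← sum_Icc_one_sub_pred]
  exact add_nonneg (sum_nonneg fun j hj => sub_nonneg.2 (hv j hj)) hv0

theorem sum_Icc_le_of_le_sub_succ {a b D : ℕ → ℝ} {n : ℕ}
    (hstep : ∀ k ∈ Icc 1 n, a k ≤ D k - D (k + 1) + b k) :
    ∑ k ∈ Icc 1 n, a k ≤ D 1 - D (n + 1) + ∑ k ∈ Icc 1 n, b k := by
  induction n with
  | zero => simp
  | succ n ih =>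
    rw [sum_Icc_succ_top (by omega), sum_Icc_succ_top (by omega)]
    have hlast := hstep (n + 1) (by simp)
    have hprev := ih fun k hk => hstep k (Icc_subset_Icc_right (by omega) hk)
    linarith

theorem sum_Icc_mul_sub_sum_Icc_mul_eq {R : Type*} [CommRing R] (h v F : ℕ → R) (n : ℕ) :
    ∑ k ∈ Icc 1 n, (h k * v k ^ 2 - (v k - v (k - 1)) * ∑ i ∈ Icc k n, h i * v i) * F k =
      ∑ k ∈ Icc 1 n, h k * v k * (v k * F k - ∑ j ∈ Icc 1 k, (v j - v (j - 1)) * F j) := by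
  have hswap : ∑ k ∈ Icc 1 n, ∑ j ∈ Icc 1 k, h k * v k * ((v j - v (j - 1)) * F j) =
      ∑ j ∈ Icc 1 n, ∑ k ∈ Icc j n, h k * v k * ((v j - v (j - 1)) * F j) :=
    sum_comm' fun k j => by simp only [mem_Icc]; omega
  calc _ = ∑ k ∈ Icc 1 n, h k * v k * (v k * F k) -
        ∑ j ∈ Icc 1 n, ∑ k ∈ Icc j n, h k * v k * ((v j - v (j - 1)) * F j) := by
        rw [← sum_sub_distrib]
        exact sum_congr rfl fun j _ => by
          rw [sub_mul, mul_sum, sum_mul]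
          exact congrArg₂ _ (by ring) (sum_congr rfl fun k _ => by ring)
    _ = _ := by
        rw [← hswap, ← sum_sub_distrib]
        exact sum_congr rfl fun k _ => by rw [mul_sub, mul_sum]

section InnerProductSpace

variable {E : Type*} [NormedAddCommGroup E] [InnerProductSpace ℝ E]

theorem Convex.norm_sub_le_of_forall_norm_sub_le {X : Set E} (hX : Convex ℝ X) {z c : E}
    (hc : c ∈ X) (hmin : ∀ y ∈ X, ‖c - z‖ ≤ ‖y - z‖) {p : E} (hp : p ∈ X) :
    ‖c - p‖ ≤ ‖z - p‖ := by
  have : Nonempty X := ⟨⟨c, hc⟩⟩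
  have hinf : ‖z - c‖ = ⨅ y : X, ‖z - y‖ :=
    le_antisymm (le_ciInf fun y => by rw [norm_sub_rev, norm_sub_rev z]; exact hmin y y.2)
      (ciInf_le (f := fun y : X => ‖z - y‖)
        ⟨0, Set.forall_mem_range.2 fun _ => norm_nonneg _⟩ ⟨c, hc⟩)
  have hobtuse : ⟪z - c, p - c⟫ ≤ 0 := (norm_eq_iInf_iff_real_inner_le_zero hX hc).1 hinf p hp
  have hexpand : ‖z - p‖ ^ 2 = ‖z - c‖ ^ 2 - 2 * ⟪z - c, p - c⟫ + ‖p - c‖ ^ 2 := by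
    rw [← norm_sub_sq_real, sub_sub_sub_cancel_right]
  rw [norm_sub_rev c p, ← pow_le_pow_iff_left₀ (norm_nonneg _) (norm_nonneg _) two_ne_zero,
    hexpand]
  linarith [sq_nonneg ‖z - c‖]

theorem norm_smul_sub_le_of_forall_norm_sub_le {X : Set E} {c z : E}
    (hcz : ∀ p ∈ X, ‖c - p‖ ≤ ‖z - p‖) (t : ℝ) {q : E} (hq : q ∈ t • X) :
    ‖t • c - q‖ ≤ ‖t • z - q‖ := by
  obtain ⟨p, hp, rfl⟩ := hq
  simp only [← smul_sub, norm_smul]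
  exact mul_le_mul_of_nonneg_left (hcz p hp) (norm_nonneg t)

theorem mul_inner_le_of_norm_le_norm_sub_smul {a : ℝ} {g u w : E}
    (hw : ‖w‖ ≤ ‖u - a • g‖) :
    a * ⟪g, u⟫ ≤ ‖u‖ ^ 2 / 2 - ‖w‖ ^ 2 / 2 + a ^ 2 * ‖g‖ ^ 2 / 2 := by
  have hexpand : ‖u - a • g‖ ^ 2 = ‖u‖ ^ 2 - 2 * (a * ⟪g, u⟫) + a ^ 2 * ‖g‖ ^ 2 := by
    rw [norm_sub_sq_real, real_inner_smul_right, real_inner_comm, norm_smul, mul_pow,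
      Real.norm_eq_abs, sq_abs]
  have hsq := pow_le_pow_left₀ (norm_nonneg w) hw 2
  rw [hexpand] at hsq
  linarith

def runningCombination (v : ℕ → ℝ) (x₀ : E) (x : ℕ → E) (n : ℕ) : E :=
  v 0 • x₀ + ∑ j ∈ Icc 1 n, (v j - v (j - 1)) • x j

variable {v : ℕ → ℝ} {x₀ : E} {x : ℕ → E}

theorem runningCombination_zero : runningCombination v x₀ x 0 = v 0 • x₀ := by
  simp [runningCombination]

theorem runningCombination_succ (n : ℕ) :
    runningCombination v x₀ x (n + 1) =
      runningCombination v x₀ x n + (v (n + 1) - v n) • x (n + 1) := by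
  rw [runningCombination, runningCombination, sum_Icc_succ_top (by omega), Nat.add_sub_cancel,
    add_assoc]

theorem smul_sub_runningCombination_succ (n : ℕ) :
    v (n + 1) • x (n + 1) - runningCombination v x₀ x (n + 1) =
      v n • x (n + 1) - runningCombination v x₀ x n := by
  rw [runningCombination_succ, sub_smul]
  abel

theorem Convex.runningCombination_mem_smul {X : Set E} (hX : Convex ℝ X) (hx₀ : x₀ ∈ X)
    {n : ℕ} (hx : ∀ j ∈ Icc 1 n, x j ∈ X) (hv0 : 0 ≤ v 0)
    (hv : ∀ j ∈ Icc 1 n, v (j - 1) ≤ v j) :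
    runningCombination v x₀ x n ∈ v n • X := by
  induction n with
  | zero => exact runningCombination_zero (x := x) ▸ Set.smul_mem_smul_set hx₀
  | succ n ih =>
    have hle : Icc 1 n ⊆ Icc 1 (n + 1) := Icc_subset_Icc_right (by omega)
    have hvn : 0 ≤ v n := nonneg_of_forall_pred_le hv0 fun j hj => hv j (hle hj)
    have hδ : 0 ≤ v (n + 1) - v n := sub_nonneg.2 (hv (n + 1) (by simp))
    have hsplit : v (n + 1) • X = v n • X + (v (n + 1) - v n) • X := by
      rw [← hX.add_smul hvn hδ, add_sub_cancel]
    rw [runningCombination_succ, hsplit]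
    exact Set.add_mem_add (ih (fun j hj => hx j (hle hj)) fun j hj => hv j (hle hj))
      (Set.smul_mem_smul_set (hx (n + 1) (by simp)))

theorem sub_sum_le_inner_smul_sub_runningCombination {X : Set E} {f : E → ℝ} {p g : E}
    {n : ℕ} (hg : ∀ y ∈ X, f p + ⟪g, y - p⟫ ≤ f y) (hx₀ : x₀ ∈ X)
    (hx : ∀ j ∈ Icc 1 n, x j ∈ X) (hv0 : 0 ≤ v 0) (hv : ∀ j ∈ Icc 1 n, v (j - 1) ≤ v j) :
    v n * (f p - f x₀) - ∑ j ∈ Icc 1 n, (v j - v (j - 1)) * (f (x j) - f x₀) ≤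
      ⟪g, v n • p - runningCombination v x₀ x n⟫ := by
  have hgap : ∀ y ∈ X, f p - f y ≤ ⟪g, p - y⟫ := fun y hy => by
    rw [← neg_sub y p, inner_neg_right]
    linarith [hg y hy]
  have hvn : v n = v 0 + ∑ j ∈ Icc 1 n, (v j - v (j - 1)) := by
    rw [sum_Icc_one_sub_pred]; ring
  have hvec : v n • p - runningCombination v x₀ x n =
      v 0 • (p - x₀) + ∑ j ∈ Icc 1 n, (v j - v (j - 1)) • (p - x j) := by
    rw [runningCombination, hvn, add_smul, sum_smul]
    simp only [smul_sub, sum_sub_distrib]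
    abel
  calc v n * (f p - f x₀) - ∑ j ∈ Icc 1 n, (v j - v (j - 1)) * (f (x j) - f x₀)
      = v 0 * (f p - f x₀) + ∑ j ∈ Icc 1 n, (v j - v (j - 1)) * (f p - f (x j)) := by
        rw [hvn, add_mul, sum_mul, add_sub_assoc, ← sum_sub_distrib]
        exact congrArg _ (sum_congr rfl fun j _ => by ring)
    _ ≤ v 0 * ⟪g, p - x₀⟫ + ∑ j ∈ Icc 1 n, (v j - v (j - 1)) * ⟪g, p - x j⟫ :=
        add_le_add (mul_le_mul_of_nonneg_left (hgap x₀ hx₀) hv0) (sum_le_sum fun j hj =>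
          mul_le_mul_of_nonneg_left (hgap (x j) (hx j hj)) (sub_nonneg.2 (hv j hj)))
    _ = ⟪g, v n • p - runningCombination v x₀ x n⟫ := by
        simp only [hvec, inner_add_right, inner_sum, real_inner_smul_right]

theorem Convex.sum_mul_inner_smul_sub_runningCombination_le {X : Set E} (hX : Convex ℝ X)
    {g : ℕ → E} {h : ℕ → ℝ} {N : ℕ} (hx₀ : x₀ ∈ X) (hx : ∀ j ∈ Icc 1 (N + 1), x j ∈ X)
    (hv0 : 0 ≤ v 0) (hv : ∀ j ∈ Icc 1 N, v (j - 1) ≤ v j)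
    (hproj : ∀ k ∈ Icc 1 N, ∀ y ∈ X,
      ‖x (k + 1) - (x k - h k • g k)‖ ≤ ‖y - (x k - h k • g k)‖) :
    ∑ k ∈ Icc 1 (N + 1), h k * v k * ⟪g k, v k • x k - runningCombination v x₀ x k⟫ ≤
      v 0 ^ 2 / 2 * ‖x 1 - x₀‖ ^ 2 +
        1 / 2 * ∑ k ∈ Icc 1 (N + 1), h k ^ 2 * v k ^ 2 * ‖g k‖ ^ 2 := by
  set u : ℕ → E := fun k => v k • x k - runningCombination v x₀ x k with hu
  have hstep : ∀ k ∈ Icc 1 N, h k * v k * ⟪g k, u k⟫ ≤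
      ‖u k‖ ^ 2 / 2 - ‖u (k + 1)‖ ^ 2 / 2 + (h k * v k) ^ 2 * ‖g k‖ ^ 2 / 2 := fun k hk => by
    have hkN := (Finset.mem_Icc.1 hk).2
    have hz := hX.runningCombination_mem_smul hx₀
      (fun j hj => hx j (Icc_subset_Icc_right (by omega) hj)) hv0
      fun j hj => hv j (Icc_subset_Icc_right hkN hj)
    have hnext : x (k + 1) ∈ X := hx (k + 1) (by simp only [Finset.mem_Icc]; omega)
    have hnear := norm_smul_sub_le_of_forall_norm_sub_le
      (fun p hp => hX.norm_sub_le_of_forall_norm_sub_le hnext (hproj k hk) hp) (v k) hz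
    refine mul_inner_le_of_norm_le_norm_sub_smul ?_
    convert hnear using 2
    · exact smul_sub_runningCombination_succ k
    · simp only [hu]; module
  have hlast : h (N + 1) * v (N + 1) * ⟪g (N + 1), u (N + 1)⟫ ≤
      ‖u (N + 1)‖ ^ 2 / 2 + (h (N + 1) * v (N + 1)) ^ 2 * ‖g (N + 1)‖ ^ 2 / 2 := by
    simpa using mul_inner_le_of_norm_le_norm_sub_smul (a := h (N + 1) * v (N + 1))
      (g := g (N + 1)) (u := u (N + 1)) (w := 0) (by rw [norm_zero]; exact norm_nonneg _)
  have hu₁ : ‖u 1‖ ^ 2 / 2 = v 0 ^ 2 / 2 * ‖x 1 - x₀‖ ^ 2 := by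
    have hu₁' : u 1 = v 0 • (x 1 - x₀) := by
      simpa [runningCombination_zero, smul_sub] using
        smul_sub_runningCombination_succ (v := v) (x₀ := x₀) (x := x) 0
    rw [hu₁', norm_smul, mul_pow, Real.norm_eq_abs, sq_abs]
    ring
  have hhalf : ∑ k ∈ Icc 1 (N + 1), (h k * v k) ^ 2 * ‖g k‖ ^ 2 / 2 =
      1 / 2 * ∑ k ∈ Icc 1 (N + 1), h k ^ 2 * v k ^ 2 * ‖g k‖ ^ 2 := by
    rw [mul_sum]
    exact sum_congr rfl fun k _ => by ring
  rw [← hu₁, ← hhalf, sum_Icc_succ_top (by omega), sum_Icc_succ_top (by omega)]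
  linarith [sum_Icc_le_of_le_sub_succ hstep]

end InnerProductSpace

theorem zamani_last_iterate_inequality_general
    (d N : ℕ) (X : Set (EuclideanSpace ℝ (Fin d)))
    (hXconv : Convex ℝ X)
    (f : EuclideanSpace ℝ (Fin d) → ℝ)
    (xhat : EuclideanSpace ℝ (Fin d)) (hxhat : xhat ∈ X)
    (h : ℕ → ℝ) (hpos : ∀ k, 1 ≤ k → k ≤ N + 1 → 0 < h k)
    (x g : ℕ → EuclideanSpace ℝ (Fin d))
    (hx1X : x 1 ∈ X)
    (hsub : ∀ k, 1 ≤ k → k ≤ N + 1 →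
      ∀ y ∈ X, f (x k) + (inner ℝ (g k) (y - x k) : ℝ) ≤ f y)
    (hupd : ∀ k, 1 ≤ k → k ≤ N →
      x (k + 1) ∈ X ∧
      ∀ y ∈ X,
        ‖x (k + 1) - (x k - h k • g k)‖ ≤ ‖y - (x k - h k • g k)‖)
    (v : ℕ → ℝ) (hv0 : 0 ≤ v 0) (hvmono : ∀ k, k ≤ N → v k ≤ v (k + 1)) :
    ∑ k ∈ Icc 1 (N + 1),
        (h k * (v k) ^ 2 - (v k - v (k - 1)) * ∑ i ∈ Icc k (N + 1), h i * v i) *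
          (f (x k) - f xhat) ≤
      (v 0) ^ 2 / 2 * ‖x 1 - xhat‖ ^ 2 +
        1 / 2 * ∑ k ∈ Icc 1 (N + 1), (h k) ^ 2 * (v k) ^ 2 * ‖g k‖ ^ 2 := by
  have hxX : ∀ k ∈ Icc 1 (N + 1), x k ∈ X := fun k hk => by
    obtain ⟨hk1, hkN⟩ := mem_Icc.1 hk
    obtain rfl | hk1 := hk1.eq_or_lt
    · exact hx1X
    · simpa [Nat.sub_add_cancel hk1.le] using (hupd (k - 1) (by omega) (by omega)).1
  have hv : ∀ k ∈ Icc 1 (N + 1), v (k - 1) ≤ v k := fun k hk => by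
    obtain ⟨hk1, hkN⟩ := mem_Icc.1 hk
    simpa [Nat.sub_add_cancel hk1] using hvmono (k - 1) (by omega)
  rw [sum_Icc_mul_sub_sum_Icc_mul_eq]
  refine (sum_le_sum fun k hk => ?_).trans <|
    hXconv.sum_mul_inner_smul_sub_runningCombination_le hxhat hxX hv0
      (fun j hj => hv j (Icc_subset_Icc_right (by omega) hj))
      fun k hk => (hupd k (mem_Icc.1 hk).1 (mem_Icc.1 hk).2).2
  obtain ⟨hk1, hkN⟩ := mem_Icc.1 hk
  have hle : Icc 1 k ⊆ Icc 1 (N + 1) := Icc_subset_Icc_right hkN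
  exact mul_le_mul_of_nonneg_left
    (sub_sum_le_inner_smul_sub_runningCombination (hsub k hk1 hkN) hxhat
      (fun j hj => hxX j (hle hj)) hv0 fun j hj => hv j (hle hj))
    (mul_nonneg (hpos k hk1 hkN).le (nonneg_of_forall_pred_le hv0 fun j hj => hv j (hle hj)))

/-- Lemma 1 (Zamani–Glineur last-iterate inequality): for the projected subgradient
method with generic positive stepsizes and any nondecreasing nonnegative weights
`0 ≤ v₀ ≤ v₁ ≤ … ≤ v_{N+1}`, with
`c_k = h_k v_k² − (v_k − v_{k−1}) ∑_{i=k}^{N+1} h_i v_i`, one has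
`∑_{k=1}^{N+1} c_k (f(x^k) − f(x̂)) ≤ (v₀²/2)‖x¹ − x̂‖² + (1/2) ∑_{k=1}^{N+1} h_k² v_k² ‖g^k‖²`. -/
theorem zamani_last_iterate_inequality
    (d N : ℕ) (X : Set (EuclideanSpace ℝ (Fin d)))
    (hXne : X.Nonempty) (hXclosed : IsClosed X) (hXconv : Convex ℝ X)
    (f : EuclideanSpace ℝ (Fin d) → ℝ)
    (hconv : ConvexOn ℝ X f)
    (xhat : EuclideanSpace ℝ (Fin d)) (hxhat : xhat ∈ X)
    (h : ℕ → ℝ) (hpos : ∀ k, 1 ≤ k → k ≤ N + 1 → 0 < h k)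
    (x g : ℕ → EuclideanSpace ℝ (Fin d))
    (hx1X : x 1 ∈ X)
    (hsub : ∀ k, 1 ≤ k → k ≤ N + 1 →
      ∀ y ∈ X, f (x k) + (inner ℝ (g k) (y - x k) : ℝ) ≤ f y)
    (hupd : ∀ k, 1 ≤ k → k ≤ N →
      x (k + 1) ∈ X ∧
      ∀ y ∈ X,
        ‖x (k + 1) - (x k - h k • g k)‖ ≤ ‖y - (x k - h k • g k)‖)
    (v : ℕ → ℝ) (hv0 : 0 ≤ v 0) (hvmono : ∀ k, k ≤ N → v k ≤ v (k + 1)) :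
    ∑ k ∈ Icc 1 (N + 1),
        (h k * (v k) ^ 2 - (v k - v (k - 1)) * ∑ i ∈ Icc k (N + 1), h i * v i) *
          (f (x k) - f xhat) ≤
      (v 0) ^ 2 / 2 * ‖x 1 - xhat‖ ^ 2 +
        1 / 2 * ∑ k ∈ Icc 1 (N + 1), (h k) ^ 2 * (v k) ^ 2 * ‖g k‖ ^ 2 :=
  zamani_last_iterate_inequality_general d N X hXconv f xhat hxhat h hpos x g hx1X hsub hupd v hv0
    hvmono
end

section
/- Let h₁, …, h_{N+1} > 0, define v_{N+1} = 1 and v_k = h_{N+1} / (∑_{i=k+1}^{N+1} h_i·v_i) for k = N down to 0. Then all v_k are positive and the sequence is nondecreasing: 0 < v₀ ≤ v₁ ≤ … ≤ v_N ≤ v_{N+1} = 1. -/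
open Finset

/-- Remark 1: the backward-recursively defined weights
`v_{N+1} = 1`, `v_k = h_{N+1} / ∑_{i=k+1}^{N+1} h_i v_i` (for positive stepsizes)
are positive and nondecreasing: `0 < v₀ ≤ v₁ ≤ … ≤ v_N ≤ v_{N+1} = 1`. -/
theorem recursive_weights_positive_monotone
    (N : ℕ) (h v : ℕ → ℝ)
    (hpos : ∀ i, 1 ≤ i → i ≤ N + 1 → 0 < h i)
    (hvN1 : v (N + 1) = 1)
    (hvrec : ∀ k, k ≤ N → v k = h (N + 1) / ∑ i ∈ Icc (k + 1) (N + 1), h i * v i) :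
    (∀ k, k ≤ N + 1 → 0 < v k) ∧ (∀ k, k ≤ N → v k ≤ v (k + 1)) ∧ v (N + 1) = 1 := by
  have hvpos : ∀ j, ∀ k, k ≤ N + 1 → N + 1 - k ≤ j → 0 < v k := by
    intro j
    induction j with
    | zero =>
      intro k hk hj
      have : k = N + 1 := by omega
      rw [this, hvN1]; norm_num
    | succ j ih =>
      intro k hk hj
      rcases eq_or_lt_of_le hk with heq | hlt
      · rw [heq, hvN1]; norm_num
      · have hkN : k ≤ N := by omega
        rw [hvrec k hkN]
        apply div_pos (hpos (N + 1) (by omega) le_rfl)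
        apply Finset.sum_pos
        · intro i hi
          simp only [Finset.mem_Icc] at hi
          exact mul_pos (hpos i (by omega) (by omega)) (ih i (by omega) (by omega))
        · exact ⟨N + 1, by simp [Finset.mem_Icc]; omega⟩
  have hpos' : ∀ k, k ≤ N + 1 → 0 < v k := fun k hk => hvpos (N + 1) k hk (by omega)
  refine ⟨hpos', ?_, hvN1⟩
  intro k hk
  rcases eq_or_lt_of_le hk with heq | hlt
  · rw [heq, hvN1, hvrec N le_rfl, Finset.Icc_self, Finset.sum_singleton, hvN1, mul_one,
      div_self (ne_of_gt (hpos (N + 1) (by omega) le_rfl))]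
  · have hk1 : k + 1 ≤ N := by omega
    rw [hvrec k (by omega), hvrec (k + 1) hk1]
    have hS : (∑ i ∈ Icc (k + 2) (N + 1), h i * v i) ≤ ∑ i ∈ Icc (k + 1) (N + 1), h i * v i := by
      apply Finset.sum_le_sum_of_subset_of_nonneg
      · apply Finset.Icc_subset_Icc_left; omega
      · intro i hi _
        simp only [Finset.mem_Icc] at hi
        exact le_of_lt (mul_pos (hpos i (by omega) (by omega)) (hpos' i (by omega)))
    have hSpos : 0 < ∑ i ∈ Icc (k + 2) (N + 1), h i * v i := by
      apply Finset.sum_pos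
      · intro i hi
        simp only [Finset.mem_Icc] at hi
        exact mul_pos (hpos i (by omega) (by omega)) (hpos' i (by omega))
      · exact ⟨N + 1, by simp [Finset.mem_Icc]; omega⟩
    gcongr
    exact le_of_lt (hpos (N + 1) (by omega) le_rfl)
end

section
/- Let X ⊆ ℝ^d be a nonempty closed convex set, f : ℝ^d → ℝ convex on X, x̂ ∈ X, and x¹ ∈ X. Let h₁, …, h_{N+1} > 0, let x^{k+1} = P_X(x^k − h_k·g^k) for k = 1, …, N where g^k is a subgradient of f at x^k, and let g^{N+1} be a subgradient of f at x^{N+1}. Define v_{N+1} = 1 and v_k = h_{N+1} / (∑_{i=k+1}^{N+1} h_i·v_i) for k = N down to 0. Then f(x^{N+1}) − f(x̂) ≤ (v₀²/(2·h_{N+1}))·‖x¹ − x̂‖² + (1/(2·h_{N+1}))·∑_{k=1}^{N+1} h_k²·v_k²·‖g^k‖². -/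
/-!
Lyapunov argument with moving comparators: put `z₀ = x̂` and
`z_{i+1} = (1 - v_i / v_{i+1}) x_{i+1} + (v_i / v_{i+1}) z_i`, so that
`x_{i+1} - z_{i+1} = (v_i / v_{i+1}) (x_{i+1} - z_i)`. The projected step measured from `z_{i+1}`,
the subgradient inequality at `x_{i+1}` and convexity of `f` on the segment `[x_{i+1}, z_i]`
combine, thanks to the identity `h_{i+1} v_{i+1}² v_i = h_{N+1} (v_{i+1} - v_i)` of the weights,
into
`v_{i+1}² ‖x_{i+2} - z_{i+1}‖² + 2 h_{N+1} f(z_{i+1})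
  ≤ v_i² ‖x_{i+1} - z_i‖² + 2 h_{N+1} f(z_i) + h_{i+1}² v_{i+1}² ‖g_{i+1}‖²`.
Telescoping up to `N`, where `v_N = 1`, and one last subgradient inequality at `x_{N+1}` against
`z_N`, combined with `2 t ⟪g, u⟫ ≤ ‖u‖² + t² ‖g‖²`, give the bound.
-/

open Finset

def IsRecursiveWeights (N : ℕ) (h v : ℕ → ℝ) : Prop :=
  v (N + 1) = 1 ∧ ∀ k ≤ N, v k = h (N + 1) / ∑ i ∈ Icc (k + 1) (N + 1), h i * v i

namespace IsRecursiveWeights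

variable {N : ℕ} {h v : ℕ → ℝ}

theorem sum_Icc_pos (hv : IsRecursiveWeights N h v) (hpos : ∀ k, 1 ≤ k → k ≤ N + 1 → 0 < h k)
    {j : ℕ} (hj : 1 ≤ j) (hjN : j ≤ N + 1) : 0 < ∑ i ∈ Icc j (N + 1), h i * v i := by
  induction hjN using Nat.decreasingInduction with
  | self => simpa [hv.1] using hpos (N + 1) (by omega) le_rfl
  | of_succ k hk ih =>
    have htail := ih (by omega)
    have hvk : 0 < v k := by
      rw [hv.2 k (by omega)]
      exact div_pos (hpos _ (by omega) le_rfl) htail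
    rw [← add_sum_Ioc_eq_sum_Icc hk.le, ← Icc_add_one_left_eq_Ioc]
    exact add_pos (mul_pos (hpos k hj hk.le) hvk) htail

theorem mul_sum_Icc_eq (hv : IsRecursiveWeights N h v)
    (hpos : ∀ k, 1 ≤ k → k ≤ N + 1 → 0 < h k) {k : ℕ} (hk : k ≤ N) :
    v k * ∑ i ∈ Icc (k + 1) (N + 1), h i * v i = h (N + 1) := by
  rw [hv.2 k hk]
  exact div_mul_cancel₀ _ (hv.sum_Icc_pos hpos (by omega) (by omega)).ne'

theorem pos (hv : IsRecursiveWeights N h v) (hpos : ∀ k, 1 ≤ k → k ≤ N + 1 → 0 < h k)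
    {k : ℕ} (hk : k ≤ N + 1) : 0 < v k := by
  rcases hk.lt_or_eq with hk | rfl
  · rw [hv.2 k (by omega)]
    exact div_pos (hpos _ (by omega) le_rfl) (hv.sum_Icc_pos hpos (by omega) hk)
  · exact hv.1 ▸ one_pos

theorem penultimate_eq_one (hv : IsRecursiveWeights N h v) (hH : h (N + 1) ≠ 0) : v N = 1 := by
  rw [hv.2 N le_rfl, Icc_self, sum_singleton, hv.1, mul_one, div_self hH]

theorem mul_sq_mul_eq (hv : IsRecursiveWeights N h v)
    (hpos : ∀ k, 1 ≤ k → k ≤ N + 1 → 0 < h k) {i : ℕ} (hi : i + 1 ≤ N) :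
    h (i + 1) * v (i + 1) ^ 2 * v i = h (N + 1) * (v (i + 1) - v i) := by
  have e₁ := hv.mul_sum_Icc_eq hpos (k := i) (by omega)
  have e₂ := hv.mul_sum_Icc_eq hpos (k := i + 1) hi
  have e₃ : ∑ j ∈ Icc (i + 1) (N + 1), h j * v j =
      h (i + 1) * v (i + 1) + ∑ j ∈ Icc (i + 1 + 1) (N + 1), h j * v j := by
    rw [← add_sum_Ioc_eq_sum_Icc (by omega), ← Icc_add_one_left_eq_Ioc]
  linear_combination v (i + 1) * e₁ - v i * e₂ - v i * v (i + 1) * e₃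

theorem le_succ (hv : IsRecursiveWeights N h v) (hpos : ∀ k, 1 ≤ k → k ≤ N + 1 → 0 < h k)
    {i : ℕ} (hi : i + 1 ≤ N) : v i ≤ v (i + 1) := by
  have : 0 ≤ h (N + 1) * (v (i + 1) - v i) := by
    rw [← hv.mul_sq_mul_eq hpos hi]
    have := hpos (i + 1) (by omega) (by omega)
    have := hv.pos hpos (k := i) (by omega)
    positivity
  exact sub_nonneg.1 (nonneg_of_mul_nonneg_right this (hpos (N + 1) (by omega) le_rfl))

end IsRecursiveWeights

open scoped InnerProductSpace

section Descent

variable {E : Type*} [NormedAddCommGroup E] [InnerProductSpace ℝ E]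

theorem norm_sub_smul_sub_sq (x g y : E) (t : ℝ) :
    ‖x - t • g - y‖ ^ 2 = ‖x - y‖ ^ 2 - 2 * t * ⟪g, x - y⟫_ℝ + t ^ 2 * ‖g‖ ^ 2 := by
  rw [sub_right_comm, norm_sub_sq_real, real_inner_smul_right, real_inner_comm, norm_smul,
    mul_pow, Real.norm_eq_abs, sq_abs]
  ring

theorem two_mul_inner_le (g u : E) (t : ℝ) :
    2 * t * ⟪g, u⟫_ℝ ≤ ‖u‖ ^ 2 + t ^ 2 * ‖g‖ ^ 2 := by
  have := norm_sub_smul_sub_sq u g 0 t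
  rw [sub_zero, sub_zero] at this
  linarith [sq_nonneg ‖u - t • g‖]

theorem Convex.norm_sub_sq_le_of_forall_norm_sub_le {X : Set E} (hX : Convex ℝ X) {p q y : E}
    (hq : q ∈ X) (hmin : ∀ w ∈ X, ‖q - p‖ ≤ ‖w - p‖) (hy : y ∈ X) :
    ‖q - y‖ ^ 2 ≤ ‖p - y‖ ^ 2 := by
  have : Nonempty X := ⟨⟨q, hq⟩⟩
  have hinf : ‖p - q‖ = ⨅ w : X, ‖p - w‖ := by
    refine le_antisymm (le_ciInf fun w => ?_)
      (ciInf_le (f := fun w : X => ‖p - w‖) ⟨0, ?_⟩ ⟨q, hq⟩)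
    · simpa only [norm_sub_rev p] using hmin w w.2
    · rintro _ ⟨w, rfl⟩
      exact norm_nonneg _
  have hobtuse := (norm_eq_iInf_iff_real_inner_le_zero hX hq).1 hinf y hy
  rw [show p - y = (p - q) - (y - q) by abel, norm_sub_sq_real (p - q), norm_sub_rev q]
  nlinarith [sq_nonneg ‖p - q‖]

def IsSubgradientOn (f : E → ℝ) (X : Set E) (x g : E) : Prop :=
  ∀ y ∈ X, f x + ⟪g, y - x⟫_ℝ ≤ f y

theorem IsSubgradientOn.sub_le_inner {X : Set E} {f : E → ℝ} {x g y : E}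
    (hg : IsSubgradientOn f X x g) (hy : y ∈ X) : f x - f y ≤ ⟪g, x - y⟫_ℝ := by
  have := hg y hy
  rw [← neg_sub x y, inner_neg_right] at this
  linarith

theorem Convex.one_sub_div_smul_add_div_smul_mem {X : Set E} (hX : Convex ℝ X) {x z : E}
    (hx : x ∈ X) (hz : z ∈ X) {a b : ℝ} (ha : 0 < a) (hab : a ≤ b) :
    (1 - a / b) • x + (a / b) • z ∈ X :=
  hX hx hz (sub_nonneg.2 ((div_le_one (ha.trans_le hab)).2 hab))
    (div_nonneg ha.le (ha.le.trans hab)) (sub_add_cancel _ _)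

theorem comparator_step {X : Set E} (hX : Convex ℝ X) {f : E → ℝ} (hf : ConvexOn ℝ X f)
    {x x' g z z' : E} {t a b H : ℝ} (hx : x ∈ X) (hz : z ∈ X)
    (hg : IsSubgradientOn f X x g)
    (hx'X : x' ∈ X) (hx' : ∀ y ∈ X, ‖x' - (x - t • g)‖ ≤ ‖y - (x - t • g)‖)
    (ha : 0 < a) (hab : a ≤ b) (hH : 0 ≤ H) (hw : t * b ^ 2 * a = H * (b - a))
    (hz' : z' = (1 - a / b) • x + (a / b) • z) :
    b ^ 2 * ‖x' - z'‖ ^ 2 + 2 * H * f z' ≤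
      a ^ 2 * ‖x - z‖ ^ 2 + 2 * H * f z + t ^ 2 * b ^ 2 * ‖g‖ ^ 2 := by
  have hb : 0 < b := ha.trans_le hab
  have hθ₀ : 0 ≤ a / b := by positivity
  have hθ₁ : 0 ≤ 1 - a / b := sub_nonneg.2 ((div_le_one hb).2 hab)
  have hθ : 1 - a / b + a / b = 1 := sub_add_cancel _ _
  have hz'X : z' ∈ X := hz' ▸ hX.one_sub_div_smul_add_div_smul_mem hx hz ha hab
  have ht : 0 ≤ t * b ^ 2 := by
    refine nonneg_of_mul_nonneg_left (b := a) ?_ ha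
    rw [hw]
    exact mul_nonneg hH (sub_nonneg.2 hab)
  have hshrink : b ^ 2 * ‖x - z'‖ ^ 2 = a ^ 2 * ‖x - z‖ ^ 2 := by
    rw [show x - z' = (a / b) • (x - z) by rw [hz']; module, norm_smul,
      Real.norm_of_nonneg hθ₀]
    field_simp
  have hproj := (hX.norm_sub_sq_le_of_forall_norm_sub_le hx'X hx' hz'X).trans_eq
    (norm_sub_smul_sub_sq x g z' t)
  have hsubg := hg.sub_le_inner hz'X
  have hsegment : a * (f z' - f z) ≤ (b - a) * (f x - f z') := by
    have hconv := hf.2 hx hz hθ₁ hθ₀ hθ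
    rw [← hz', smul_eq_mul, smul_eq_mul] at hconv
    have := mul_le_mul_of_nonneg_left hconv hb.le
    field_simp at this
    linarith
  have hdecrease : H * (f z' - f z) ≤ t * b ^ 2 * (f x - f z') := by
    refine le_of_mul_le_mul_left ?_ ha
    calc a * (H * (f z' - f z)) = H * (a * (f z' - f z)) := by ring
      _ ≤ H * ((b - a) * (f x - f z')) := mul_le_mul_of_nonneg_left hsegment hH
      _ = a * (t * b ^ 2 * (f x - f z')) := by linear_combination -(f x - f z') * hw
  calc b ^ 2 * ‖x' - z'‖ ^ 2 + 2 * H * f z'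
      ≤ b ^ 2 * (‖x - z'‖ ^ 2 - 2 * t * ⟪g, x - z'⟫_ℝ + t ^ 2 * ‖g‖ ^ 2) + 2 * H * f z' := by
        gcongr
    _ ≤ a ^ 2 * ‖x - z‖ ^ 2 - 2 * (t * b ^ 2) * (f x - f z') + t ^ 2 * b ^ 2 * ‖g‖ ^ 2
        + 2 * H * f z' := by
        nlinarith [mul_le_mul_of_nonneg_left hsubg ht]
    _ ≤ a ^ 2 * ‖x - z‖ ^ 2 + 2 * H * f z + t ^ 2 * b ^ 2 * ‖g‖ ^ 2 := by linarith

noncomputable def comparator (v : ℕ → ℝ) (x : ℕ → E) (xhat : E) : ℕ → E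
  | 0 => xhat
  | i + 1 => (1 - v i / v (i + 1)) • x (i + 1) + (v i / v (i + 1)) • comparator v x xhat i

theorem comparator_invariant {X : Set E} (hX : Convex ℝ X) {f : E → ℝ} (hf : ConvexOn ℝ X f)
    {N : ℕ} {H : ℝ} {h v : ℕ → ℝ} {x g : ℕ → E} {xhat : E} (hxhat : xhat ∈ X) (hx1 : x 1 ∈ X)
    (hsub : ∀ k, 1 ≤ k → k ≤ N → IsSubgradientOn f X (x k) (g k))
    (hupd : ∀ k, 1 ≤ k → k ≤ N → x (k + 1) ∈ X ∧
      ∀ y ∈ X, ‖x (k + 1) - (x k - h k • g k)‖ ≤ ‖y - (x k - h k • g k)‖)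
    (hv : ∀ k ≤ N, 0 < v k) (hmono : ∀ i, i + 1 ≤ N → v i ≤ v (i + 1)) (hH : 0 ≤ H)
    (hw : ∀ i, i + 1 ≤ N → h (i + 1) * v (i + 1) ^ 2 * v i = H * (v (i + 1) - v i))
    {j : ℕ} (hj : j ≤ N) :
    x (j + 1) ∈ X ∧ comparator v x xhat j ∈ X ∧
      v j ^ 2 * ‖x (j + 1) - comparator v x xhat j‖ ^ 2 + 2 * H * f (comparator v x xhat j) ≤
        v 0 ^ 2 * ‖x 1 - xhat‖ ^ 2 + 2 * H * f xhat +
          ∑ k ∈ Icc 1 j, h k ^ 2 * v k ^ 2 * ‖g k‖ ^ 2 := by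
  induction j with
  | zero => simpa [comparator] using ⟨hx1, hxhat⟩
  | succ i ih =>
    obtain ⟨hxi, hzi, hbound⟩ := ih (by omega)
    obtain ⟨hxi', hmin⟩ := hupd (i + 1) (by omega) hj
    have hstep := comparator_step hX hf hxi hzi (hsub (i + 1) (by omega) hj) hxi' hmin
      (hv i (by omega)) (hmono i hj) hH (hw i hj) rfl
    refine ⟨hxi', hX.one_sub_div_smul_add_div_smul_mem hxi hzi (hv i (by omega)) (hmono i hj),
      ?_⟩
    rw [sum_Icc_succ_top (by omega)]
    simp only [comparator]
    linarith

end Descent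

theorem last_iterate_bound_with_recursive_weights_general
    (d N : ℕ) (X : Set (EuclideanSpace ℝ (Fin d)))
    (hXconv : Convex ℝ X)
    (f : EuclideanSpace ℝ (Fin d) → ℝ)
    (hconv : ConvexOn ℝ X f)
    (xhat : EuclideanSpace ℝ (Fin d)) (hxhat : xhat ∈ X)
    (h : ℕ → ℝ) (hpos : ∀ k, 1 ≤ k → k ≤ N + 1 → 0 < h k)
    (x g : ℕ → EuclideanSpace ℝ (Fin d))
    (hx1X : x 1 ∈ X)
    (hsub : ∀ k, 1 ≤ k → k ≤ N + 1 →
      ∀ y ∈ X, f (x k) + (inner ℝ (g k) (y - x k) : ℝ) ≤ f y)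
    (hupd : ∀ k, 1 ≤ k → k ≤ N →
      x (k + 1) ∈ X ∧
      ∀ y ∈ X,
        ‖x (k + 1) - (x k - h k • g k)‖ ≤ ‖y - (x k - h k • g k)‖)
    (v : ℕ → ℝ)
    (hvN1 : v (N + 1) = 1)
    (hvrec : ∀ k, k ≤ N → v k = h (N + 1) / ∑ i ∈ Icc (k + 1) (N + 1), h i * v i) :
    f (x (N + 1)) - f xhat ≤
      (v 0) ^ 2 / (2 * h (N + 1)) * ‖x 1 - xhat‖ ^ 2 +
        1 / (2 * h (N + 1)) * ∑ k ∈ Icc 1 (N + 1), (h k) ^ 2 * (v k) ^ 2 * ‖g k‖ ^ 2 := by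
  have hv : IsRecursiveWeights N h v := ⟨hvN1, hvrec⟩
  have hH : 0 < h (N + 1) := hpos (N + 1) (by omega) le_rfl
  obtain ⟨-, hzX, hbound⟩ := comparator_invariant hXconv hconv hxhat hx1X
    (fun k hk₁ _ => hsub k hk₁ (by omega)) hupd (fun k hk => hv.pos hpos hk.step)
    (fun i hi => hv.le_succ hpos hi) hH.le (fun i hi => hv.mul_sq_mul_eq hpos hi) le_rfl
  set z := comparator v x xhat N
  have hlast := IsSubgradientOn.sub_le_inner (hsub (N + 1) (by omega) le_rfl) hzX
  have hyoung := two_mul_inner_le (g (N + 1)) (x (N + 1) - z) (h (N + 1))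
  rw [hv.penultimate_eq_one hH.ne', one_pow, one_mul] at hbound
  rw [sum_Icc_succ_top (by omega), hvN1, div_mul_eq_mul_div, one_div_mul_eq_div, ← add_div,
    le_div_iff₀ (by positivity)]
  linarith [mul_le_mul_of_nonneg_left hlast (by positivity : (0 : ℝ) ≤ 2 * h (N + 1))]

/-- Inequality (neq_Zamani_1): with the backward-recursive weights
`v_{N+1} = 1`, `v_k = h_{N+1} / ∑_{i=k+1}^{N+1} h_i v_i`, the projected subgradient
method satisfies
`f(x^{N+1}) − f(x̂) ≤ (v₀²/(2h_{N+1}))‖x¹ − x̂‖² + (1/(2h_{N+1})) ∑_{k=1}^{N+1} h_k² v_k² ‖g^k‖²`. -/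
theorem last_iterate_bound_with_recursive_weights
    (d N : ℕ) (X : Set (EuclideanSpace ℝ (Fin d)))
    (hXne : X.Nonempty) (hXclosed : IsClosed X) (hXconv : Convex ℝ X)
    (f : EuclideanSpace ℝ (Fin d) → ℝ)
    (hconv : ConvexOn ℝ X f)
    (xhat : EuclideanSpace ℝ (Fin d)) (hxhat : xhat ∈ X)
    (h : ℕ → ℝ) (hpos : ∀ k, 1 ≤ k → k ≤ N + 1 → 0 < h k)
    (x g : ℕ → EuclideanSpace ℝ (Fin d))
    (hx1X : x 1 ∈ X)
    (hsub : ∀ k, 1 ≤ k → k ≤ N + 1 →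
      ∀ y ∈ X, f (x k) + (inner ℝ (g k) (y - x k) : ℝ) ≤ f y)
    (hupd : ∀ k, 1 ≤ k → k ≤ N →
      x (k + 1) ∈ X ∧
      ∀ y ∈ X,
        ‖x (k + 1) - (x k - h k • g k)‖ ≤ ‖y - (x k - h k • g k)‖)
    (v : ℕ → ℝ)
    (hvN1 : v (N + 1) = 1)
    (hvrec : ∀ k, k ≤ N → v k = h (N + 1) / ∑ i ∈ Icc (k + 1) (N + 1), h i * v i) :
    f (x (N + 1)) - f xhat ≤
      (v 0) ^ 2 / (2 * h (N + 1)) * ‖x 1 - xhat‖ ^ 2 +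
        1 / (2 * h (N + 1)) * ∑ k ∈ Icc 1 (N + 1), (h k) ^ 2 * (v k) ^ 2 * ‖g k‖ ^ 2 :=
  last_iterate_bound_with_recursive_weights_general d N X hXconv f hconv xhat hxhat h hpos x g hx1X
    hsub hupd v hvN1 hvrec
end

section
/- Let h₁, …, h_{N+1} > 0, define v_{N+1} = 1 and v_k = h_{N+1} / (∑_{i=k+1}^{N+1} h_i·v_i) for k = N down to 0. Then for every k = 0, 1, …, N−1: 1/v_k² = 1 + (2/h_{N+1})·∑_{i=k+1}^{N} h_i + (1/h_{N+1}²)·∑_{i=k+1}^{N} h_i²·v_i². -/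
open Finset

/-- Lemma 4, part 2 (lem_vk_prop.2): for the backward-recursive weights,
`1/v_k² = 1 + (2/h_{N+1}) ∑_{i=k+1}^{N} h_i + (1/h_{N+1}²) ∑_{i=k+1}^{N} h_i² v_i²`
for `k = 0, …, N−1`. -/
theorem recursive_weights_inverse_square_formula
    (N : ℕ) (h v : ℕ → ℝ)
    (hpos : ∀ i, 1 ≤ i → i ≤ N + 1 → 0 < h i)
    (hvN1 : v (N + 1) = 1)
    (hvrec : ∀ k, k ≤ N → v k = h (N + 1) / ∑ i ∈ Icc (k + 1) (N + 1), h i * v i) :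
    ∀ k, k + 1 ≤ N →
      1 / (v k) ^ 2 =
        1 + 2 / h (N + 1) * ∑ i ∈ Icc (k + 1) N, h i +
          1 / (h (N + 1)) ^ 2 * ∑ i ∈ Icc (k + 1) N, (h i) ^ 2 * (v i) ^ 2 := by
  have hN1pos : 0 < h (N + 1) := hpos (N + 1) (by omega) le_rfl
  have hvpos : ∀ d k, N + 1 ≤ k + d → k ≤ N + 1 → 0 < v k := by
    intro d
    induction d with
    | zero =>
      intro k h1 h2
      have hk : k = N + 1 := by omega
      rw [hk, hvN1]; norm_num
    | succ d ih =>
      intro k h1 h2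
      rcases Nat.lt_or_ge k (N + 1) with hk | hk
      · have hkN : k ≤ N := by omega
        rw [hvrec k hkN]
        apply div_pos hN1pos
        apply Finset.sum_pos
        · intro i hi
          rw [Finset.mem_Icc] at hi
          exact mul_pos (hpos i (by omega) hi.2) (ih i (by omega) hi.2)
        · exact Finset.nonempty_Icc.2 (by omega)
      · have hk' : k = N + 1 := by omega
        rw [hk', hvN1]; norm_num
  have hv : ∀ k, k ≤ N + 1 → 0 < v k := fun k hk => hvpos (N + 1) k (by omega) hk
  have hvN : v N = 1 := by
    rw [hvrec N le_rfl, Finset.Icc_self, Finset.sum_singleton, hvN1, mul_one,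
      div_self hN1pos.ne']
  have hSpos : ∀ k, k ≤ N → 0 < ∑ i ∈ Icc (k + 1) (N + 1), h i * v i := by
    intro k hk
    apply Finset.sum_pos
    · intro i hi
      rw [Finset.mem_Icc] at hi
      exact mul_pos (hpos i (by omega) hi.2) (hv i hi.2)
    · exact Finset.nonempty_Icc.2 (by omega)
  have hstep : ∀ k, k + 1 ≤ N →
      1 / (v k) ^ 2 = 1 / (v (k + 1)) ^ 2 + 2 * h (k + 1) / h (N + 1)
        + (h (k + 1)) ^ 2 * (v (k + 1)) ^ 2 / (h (N + 1)) ^ 2 := by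
    intro k hk
    have hins : Icc (k + 1) (N + 1) = insert (k + 1) (Icc (k + 2) (N + 1)) := by
      ext x; simp [Finset.mem_Icc]; omega
    have hsplit : ∑ i ∈ Icc (k + 1) (N + 1), h i * v i
        = h (k + 1) * v (k + 1) + ∑ i ∈ Icc (k + 2) (N + 1), h i * v i := by
      rw [hins, Finset.sum_insert (by simp)]
    have hS2pos : 0 < ∑ i ∈ Icc (k + 2) (N + 1), h i * v i := hSpos (k + 1) hk
    have hvk1pos : 0 < v (k + 1) := hv (k + 1) (by omega)
    have hSval : ∑ i ∈ Icc (k + 2) (N + 1), h i * v i = h (N + 1) / v (k + 1) := by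
      have := hvrec (k + 1) hk
      rw [this]
      field_simp
    rw [hvrec k (by omega), hsplit, hSval]
    field_simp
    ring
  have main : ∀ j k, k + 1 + j = N →
      1 / (v k) ^ 2 =
        1 + 2 / h (N + 1) * ∑ i ∈ Icc (k + 1) N, h i +
          1 / (h (N + 1)) ^ 2 * ∑ i ∈ Icc (k + 1) N, (h i) ^ 2 * (v i) ^ 2 := by
    intro j
    induction j with
    | zero =>
      intro k hk
      have hkN : k + 1 = N := by omega
      rw [hstep k (by omega), hkN, hvN, Finset.Icc_self, Finset.sum_singleton,
        Finset.sum_singleton, hvN]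
      ring
    | succ j ih =>
      intro k hk
      have hins : Icc (k + 1) N = insert (k + 1) (Icc (k + 2) N) := by
        ext x; simp [Finset.mem_Icc]; omega
      rw [hstep k (by omega), ih (k + 1) (by omega), hins,
        Finset.sum_insert (by simp), Finset.sum_insert (by simp)]
      ring
  intro k hk
  exact main (N - (k + 1)) k (by omega)
end

section
/- Let h₁, …, h_{N+1} > 0 satisfy h_j ≥ h_{N+1} for all j = 1, …, N+1. Define v_{N+1} = 1 and v_k = h_{N+1} / (∑_{i=k+1}^{N+1} h_i·v_i) for k = N down to 0. Then for every k = 0, 1, …, N−1: v_k² ≤ 1/(2·(N − k) + 1). -/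
/-!
Write `S k = ∑_{i=k+1}^{N+1} h_i v_i`, so that `v_k = h_{N+1} / S k` and `S N = h_{N+1}`.
Splitting off the first term, `S k = h_{k+1} v_{k+1} + S (k+1)` with `v_{k+1} S (k+1) = h_{N+1}`,
hence `S k ^ 2 ≥ S (k+1) ^ 2 + 2 h_{k+1} h_{N+1} ≥ S (k+1) ^ 2 + 2 h_{N+1} ^ 2`.
Telescoping gives `S k ^ 2 ≥ h_{N+1} ^ 2 (2 (N - k) + 1)`, which is the claim.
-/

open Finset

theorem sum_Icc_succ_eq_add_sum_Icc {M : Type*} [AddCommMonoid M] (f : ℕ → M) {k n : ℕ}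
    (hk : k + 1 ≤ n) :
    ∑ i ∈ Icc (k + 1) n, f i = f (k + 1) + ∑ i ∈ Icc (k + 2) n, f i := by
  rw [← add_sum_Ioc_eq_sum_Icc hk, ← Icc_add_one_left_eq_Ioc]
  rfl

theorem sq_sum_Icc_recursive_weights_ge (N : ℕ) (h v : ℕ → ℝ) (hN : 0 < h (N + 1))
    (hge : ∀ j, 1 ≤ j → j ≤ N + 1 → h (N + 1) ≤ h j)
    (hvN1 : v (N + 1) = 1)
    (hvrec : ∀ k, k ≤ N → v k = h (N + 1) / ∑ i ∈ Icc (k + 1) (N + 1), h i * v i)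
    {k : ℕ} (hk : k ≤ N) :
    h (N + 1) ^ 2 * (2 * ((N : ℝ) - k) + 1) ≤ (∑ i ∈ Icc (k + 1) (N + 1), h i * v i) ^ 2 := by
  induction hk using Nat.decreasingInduction with
  | self => simp [hvN1]
  | of_succ k hk ih =>
    let S : ℕ → ℝ := fun k => ∑ i ∈ Icc (k + 1) (N + 1), h i * v i
    change _ ≤ S (k + 1) ^ 2 at ih
    change _ ≤ S k ^ 2
    push_cast at ih
    have hS_ne : S (k + 1) ≠ 0 := by
      have : (k : ℝ) + 1 ≤ N := by exact_mod_cast hk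
      exact pow_ne_zero_iff two_ne_zero |>.mp (lt_of_lt_of_le (by positivity) ih).ne'
    have hvS : v (k + 1) * S (k + 1) = h (N + 1) := by
      rw [hvrec (k + 1) hk]
      exact div_mul_cancel₀ _ hS_ne
    have hsplit : S k = h (k + 1) * v (k + 1) + S (k + 1) :=
      sum_Icc_succ_eq_add_sum_Icc _ (by omega)
    have hhk : h (N + 1) ≤ h (k + 1) := hge (k + 1) (by omega) (by omega)
    calc h (N + 1) ^ 2 * (2 * ((N : ℝ) - k) + 1)
        = h (N + 1) ^ 2 * (2 * ((N : ℝ) - (k + 1)) + 1) + 2 * h (N + 1) * h (N + 1) := by ring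
      _ ≤ S (k + 1) ^ 2 + 2 * h (k + 1) * h (N + 1) := by gcongr
      _ = S (k + 1) ^ 2 + 2 * (h (k + 1) * v (k + 1)) * S (k + 1) := by rw [← hvS]; ring
      _ ≤ (h (k + 1) * v (k + 1) + S (k + 1)) ^ 2 := by nlinarith [sq_nonneg (h (k + 1) * v (k + 1))]
      _ = S k ^ 2 := by rw [hsplit]

/-- Corollary 3 (col_vk_neq): if additionally `h_j ≥ h_{N+1}` for all
`j = 1, …, N+1`, then the backward-recursive weights satisfy
`v_k² ≤ 1/(2(N − k) + 1)` for `k = 0, …, N−1`. -/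
theorem recursive_weights_square_bound
    (N : ℕ) (h v : ℕ → ℝ)
    (hpos : ∀ i, 1 ≤ i → i ≤ N + 1 → 0 < h i)
    (hge : ∀ j, 1 ≤ j → j ≤ N + 1 → h (N + 1) ≤ h j)
    (hvN1 : v (N + 1) = 1)
    (hvrec : ∀ k, k ≤ N → v k = h (N + 1) / ∑ i ∈ Icc (k + 1) (N + 1), h i * v i) :
    ∀ k, k + 1 ≤ N →
      (v k) ^ 2 ≤ 1 / (2 * ((N : ℝ) - (k : ℝ)) + 1) := by
  intro k hk
  have hkN : k ≤ N := by omega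
  have hN : 0 < h (N + 1) := hpos (N + 1) (by omega) le_rfl
  have hc : (0 : ℝ) < 2 * ((N : ℝ) - k) + 1 := by
    have : (k : ℝ) ≤ N := by exact_mod_cast hkN
    linarith
  have key := sq_sum_Icc_recursive_weights_ge N h v hN hge hvN1 hvrec hkN
  rw [hvrec k hkN, div_pow, div_le_div_iff₀ (lt_of_lt_of_le (by positivity) key) hc, one_mul]
  exact key
end

section
/- Let N ≥ 2 and let y₁, …, y_{N−1} be real numbers with 0 ≤ y_i ≤ 1 for all i. Set S := 1 + ∑_{i=1}^{N−1} y_i. Then ∑_{k=1}^{N−1} y_k / ((N − k)·(1 + ∑_{i=1}^{k} y_i)) ≤ (4·log S + 5) / max{S − 1, 1}. -/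
/-!
Write `s k = 1 + y₁ + ⋯ + y_k` and `S = s (N - 1)`. Since `y_k / s_k ≤ log s_k - log s_{k-1}`,
the sum `∑ y_k / s_k` telescopes to at most `log S`. The terms with `N - k ≥ S - 1` therefore
contribute at most `log S / max (S - 1) 1`. For the remaining terms, `y_k ≤ 1` gives
`s_k ≥ S + 1 - (N - k)`, and by partial fractions
`1 / ((N - k) (S + 1 - (N - k))) = (1 / (N - k) + 1 / (S + 1 - (N - k))) / (S + 1)`;
the first sum is a harmonic sum of length at most `S - 1`, the second one is again a
telescoping logarithmic sum, so these terms contribute at most `(1 + 2 log S) / (S + 1)`.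
-/

open Finset Real

theorem Real.sub_div_le_log_sub_log {a b : ℝ} (ha : 0 < a) (hb : 0 < b) :
    (b - a) / b ≤ log b - log a := by
  have := one_sub_inv_le_log_of_pos (div_pos hb ha)
  rw [log_div hb.ne' ha.ne', inv_div] at this
  rwa [sub_div, div_self hb.ne']

theorem sum_Ioc_sub_div_le_log_sub_log (s : ℕ → ℝ) {a b : ℕ} (hab : a ≤ b)
    (hs : ∀ k ∈ Icc a b, 0 < s k) :
    ∑ k ∈ Ioc a b, (s k - s (k - 1)) / s k ≤ log (s b) - log (s a) := by
  induction b, hab using Nat.le_induction with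
  | base => simp
  | succ b hab ih =>
    rw [sum_Ioc_succ_top hab, Nat.add_sub_cancel]
    have hstep := sub_div_le_log_sub_log (hs b (by simp only [mem_Icc]; omega))
      (hs (b + 1) (by simp only [mem_Icc]; omega))
    have hsum := ih fun k hk => hs k (by simp only [mem_Icc] at hk ⊢; omega)
    linarith

theorem sum_Ioc_inv_add_le_log_sub_log (c : ℝ) {a b : ℕ} (hab : a ≤ b) (hc : 0 < c + a) :
    ∑ k ∈ Ioc a b, (c + k)⁻¹ ≤ log (c + b) - log (c + a) := by
  have hpos : ∀ k ∈ Icc a b, 0 < c + k := fun k hk => by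
    have : (a : ℝ) ≤ k := by exact_mod_cast (mem_Icc.1 hk).1
    linarith
  convert sum_Ioc_sub_div_le_log_sub_log (fun k => c + k) hab hpos using 2 with k hk
  rw [Nat.cast_sub (by simp only [mem_Ioc] at hk; omega)]
  simp

theorem sum_Ioc_inv_sub_eq_harmonic (a n : ℕ) :
    ∑ k ∈ Ioc a n, ((n : ℝ) + 1 - k)⁻¹ = harmonic (n - a) := by
  rw [harmonic_eq_sum_Icc]
  push_cast
  refine sum_nbij' (fun k => n + 1 - k) (fun j => n + 1 - j) ?_ ?_ ?_ ?_ ?_ <;>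
    intro k hk <;> simp only [mem_Ioc, mem_Icc] at hk ⊢
  · omega
  · omega
  · omega
  · omega
  · rw [Nat.cast_sub (by omega)]
    push_cast
    ring

theorem harmonic_le_one_add_log_of_le {n : ℕ} {x : ℝ} (hx : 1 ≤ x) (hn : (n : ℝ) ≤ x) :
    (harmonic n : ℝ) ≤ 1 + log x := by
  refine (harmonic_le_one_add_log n).trans ?_
  rcases n.eq_zero_or_pos with rfl | hn0
  · simpa using log_nonneg hx
  · gcongr

theorem div_mul_le_inv_add_inv_div {y x t s : ℝ} (hy1 : y ≤ 1) (hx : 0 < x)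
    (ht : 0 < t) (hts : t ≤ s) :
    y / (x * s) ≤ (x⁻¹ + t⁻¹) / (x + t) := by
  calc y / (x * s) ≤ 1 / (x * t) :=
        div_le_div₀ zero_le_one hy1 (by positivity) (by gcongr)
    _ = (x⁻¹ + t⁻¹) / (x + t) := by field_simp; ring

noncomputable def onePlusPartialSum (y : ℕ → ℝ) (k : ℕ) : ℝ :=
  1 + ∑ i ∈ Icc 1 k, y i

namespace onePlusPartialSum

variable (y : ℕ → ℝ)

theorem zero : onePlusPartialSum y 0 = 1 := by
  simp [onePlusPartialSum]

theorem sub_pred {k : ℕ} (hk : 1 ≤ k) :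
    onePlusPartialSum y k - onePlusPartialSum y (k - 1) = y k := by
  obtain ⟨j, rfl⟩ : ∃ j, k = j + 1 := ⟨k - 1, by omega⟩
  simp [onePlusPartialSum, sum_Icc_succ_top]

theorem one_le {k : ℕ} (hy : ∀ i ∈ Icc 1 k, 0 ≤ y i) : 1 ≤ onePlusPartialSum y k :=
  le_add_of_nonneg_right (sum_nonneg hy)

theorem sub_le {k n : ℕ} (hkn : k ≤ n) (hy : ∀ i ∈ Icc 1 n, y i ≤ 1) :
    onePlusPartialSum y n - onePlusPartialSum y k ≤ n - k := by
  induction n, hkn using Nat.le_induction with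
  | base => simp
  | succ n hkn ih =>
    have hstep := sub_pred y (Nat.le_add_left 1 n)
    have hlast := hy (n + 1) (by simp)
    have hprev := ih fun i hi => hy i (by simp only [mem_Icc] at hi ⊢; omega)
    rw [Nat.add_sub_cancel] at hstep
    push_cast
    linarith

theorem sum_div_le_log {n : ℕ} (hy : ∀ i ∈ Icc 1 n, 0 ≤ y i) :
    ∑ k ∈ Icc 1 n, y k / onePlusPartialSum y k ≤ log (onePlusPartialSum y n) := by
  have hpos : ∀ k ∈ Icc 0 n, 0 < onePlusPartialSum y k := fun k hk =>
    one_pos.trans_le (one_le y fun i hi => hy i (by simp only [mem_Icc] at hk hi ⊢; omega))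
  have key := sum_Ioc_sub_div_le_log_sub_log (onePlusPartialSum y) (Nat.zero_le n) hpos
  rw [zero, log_one, sub_zero, ← Icc_add_one_left_eq_Ioc, zero_add] at key
  refine le_of_eq_of_le (sum_congr rfl fun k hk => ?_) key
  rw [sub_pred y (mem_Icc.1 hk).1]

end onePlusPartialSum

section Splitting

variable {y : ℕ → ℝ} {n : ℕ}

theorem sum_Ioc_head_le (hy0 : ∀ i ∈ Icc 1 n, 0 ≤ y i) {a : ℕ} (haN : a ≤ n)
    (ha : (a : ℝ) ≤ n + 2 - onePlusPartialSum y n) :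
    ∑ k ∈ Ioc 0 a, y k / (((n : ℝ) + 1 - k) * onePlusPartialSum y k) ≤
      log (onePlusPartialSum y n) / max (onePlusPartialSum y n - 1) 1 := by
  set s := onePlusPartialSum y
  set D := max (s n - 1) 1
  have hD : 0 < D := lt_max_of_lt_right one_pos
  have hs : ∀ k ∈ Icc 1 n, 0 < s k := fun k hk => one_pos.trans_le <|
    onePlusPartialSum.one_le y fun i hi => hy0 i (by simp only [mem_Icc] at hk hi ⊢; omega)
  calc ∑ k ∈ Ioc 0 a, y k / ((n + 1 - k) * s k)
      ≤ ∑ k ∈ Ioc 0 a, y k / s k / D := by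
        refine sum_le_sum fun k hk => ?_
        have hk' : k ∈ Icc 1 n := by simp only [mem_Icc, mem_Ioc] at hk ⊢; omega
        have hka : (k : ℝ) ≤ a := by exact_mod_cast (mem_Ioc.1 hk).2
        have hkn : (k : ℝ) ≤ n := by exact_mod_cast (mem_Icc.1 hk').2
        have hDk : D ≤ n + 1 - k := max_le (by linarith) (by linarith)
        rw [div_div, mul_comm (s k)]
        exact div_le_div_of_nonneg_left (hy0 k hk') (mul_pos hD (hs k hk'))
          (by gcongr; exact (hs k hk').le)
    _ = (∑ k ∈ Ioc 0 a, y k / s k) / D := (sum_div _ _ _).symm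
    _ ≤ (∑ k ∈ Icc 1 n, y k / s k) / D := by
        refine div_le_div_of_nonneg_right (sum_le_sum_of_subset_of_nonneg ?_
          fun k hk _ => div_nonneg (hy0 k hk) (hs k hk).le) hD.le
        intro k hk
        simp only [mem_Icc, mem_Ioc] at hk ⊢
        omega
    _ ≤ log (s n) / D := by
        gcongr
        exact onePlusPartialSum.sum_div_le_log y hy0

theorem sum_Ioc_tail_le (hy0 : ∀ i ∈ Icc 1 n, 0 ≤ y i) (hy1 : ∀ i ∈ Icc 1 n, y i ≤ 1)
    {a : ℕ} (haN : a ≤ n) (ha : (n : ℝ) + 1 - onePlusPartialSum y n ≤ a) :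
    ∑ k ∈ Ioc a n, y k / (((n : ℝ) + 1 - k) * onePlusPartialSum y k) ≤
      (1 + 2 * log (onePlusPartialSum y n)) / (onePlusPartialSum y n + 1) := by
  set s := onePlusPartialSum y
  set S := s n
  have hS : 1 ≤ S := onePlusPartialSum.one_le y hy0
  calc ∑ k ∈ Ioc a n, y k / ((n + 1 - k) * s k)
      ≤ ∑ k ∈ Ioc a n, (((n : ℝ) + 1 - k)⁻¹ + (S + 1 - (n + 1) + k)⁻¹) / (S + 1) := by
        refine sum_le_sum fun k hk => ?_
        have hk' : k ∈ Icc 1 n := by simp only [mem_Icc, mem_Ioc] at hk ⊢; omega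
        have hak : (a : ℝ) + 1 ≤ k := by exact_mod_cast (mem_Ioc.1 hk).1
        have hkn : (k : ℝ) ≤ n := by exact_mod_cast (mem_Icc.1 hk').2
        have hgap := onePlusPartialSum.sub_le y (mem_Icc.1 hk').2 hy1
        have hterm := div_mul_le_inv_add_inv_div (hy1 k hk')
          (show (0 : ℝ) < n + 1 - k by linarith)
          (show (0 : ℝ) < S + 1 - (n + 1) + k by linarith)
          (show S + 1 - (n + 1) + k ≤ s k by linarith)
        rwa [show (n : ℝ) + 1 - k + (S + 1 - (n + 1) + k) = S + 1 by ring] at hterm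
    _ = (∑ k ∈ Ioc a n, ((n : ℝ) + 1 - k)⁻¹ +
          ∑ k ∈ Ioc a n, (S + 1 - (n + 1) + k)⁻¹) / (S + 1) := by
        rw [← sum_div, sum_add_distrib]
    _ ≤ ((1 + log S) + log S) / (S + 1) := by
        gcongr
        · rw [sum_Ioc_inv_sub_eq_harmonic]
          refine harmonic_le_one_add_log_of_le hS ?_
          rw [Nat.cast_sub haN]
          linarith
        · have hlog := sum_Ioc_inv_add_le_log_sub_log (S + 1 - (n + 1)) haN (by linarith)
          have hlast : S + 1 - (n + 1) + n = S := by ring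
          rw [hlast] at hlog
          linarith [log_nonneg (show 1 ≤ S + 1 - (n + 1) + a by linarith)]
    _ = (1 + 2 * log S) / (S + 1) := by ring

end Splitting

theorem key_series_bound_general
    (N : ℕ) (y : ℕ → ℝ)
    (hy0 : ∀ i, 1 ≤ i → i ≤ N - 1 → 0 ≤ y i)
    (hy1 : ∀ i, 1 ≤ i → i ≤ N - 1 → y i ≤ 1) :
    ∑ k ∈ Icc 1 (N - 1),
        y k / (((N : ℝ) - (k : ℝ)) * (1 + ∑ i ∈ Icc 1 k, y i)) ≤
      (4 * Real.log (1 + ∑ i ∈ Icc 1 (N - 1), y i) + 5) /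
        max ((1 + ∑ i ∈ Icc 1 (N - 1), y i) - 1) 1 := by
  obtain _ | n := N
  · norm_num
  simp only [Nat.add_sub_cancel, Nat.cast_add, Nat.cast_one] at hy0 hy1 ⊢
  change ∑ k ∈ Icc 1 n, y k / (((n : ℝ) + 1 - k) * onePlusPartialSum y k) ≤
    (4 * log (onePlusPartialSum y n) + 5) / max (onePlusPartialSum y n - 1) 1
  replace hy0 : ∀ i ∈ Icc 1 n, 0 ≤ y i := fun i hi => hy0 i (mem_Icc.1 hi).1 (mem_Icc.1 hi).2
  replace hy1 : ∀ i ∈ Icc 1 n, y i ≤ 1 := fun i hi => hy1 i (mem_Icc.1 hi).1 (mem_Icc.1 hi).2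
  set S := onePlusPartialSum y n
  have hS : 1 ≤ S := onePlusPartialSum.one_le y hy0
  have hSn : S ≤ n + 1 := by
    have := onePlusPartialSum.sub_le y (Nat.zero_le n) hy1
    rw [onePlusPartialSum.zero] at this
    push_cast at this
    linarith
  set a := ⌈(n : ℝ) + 1 - S⌉₊
  have haN : a ≤ n := Nat.ceil_le.2 (by linarith)
  have head := sum_Ioc_head_le hy0 haN
    (by linarith [Nat.ceil_lt_add_one (by linarith : (0 : ℝ) ≤ n + 1 - S)])
  have tail := sum_Ioc_tail_le hy0 hy1 haN (Nat.le_ceil _)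
  have hD : 0 < max (S - 1) 1 := lt_max_of_lt_right one_pos
  have tail' := tail.trans <| div_le_div_of_nonneg_left (by linarith [log_nonneg hS]) hD
    (max_le (by linarith) (by linarith))
  rw [show Icc 1 n = Ioc 0 n from Icc_add_one_left_eq_Ioc 0 n,
    ← sum_Ioc_consecutive _ (Nat.zero_le a) haN]
  calc _ ≤ log S / max (S - 1) 1 + (1 + 2 * log S) / max (S - 1) 1 := add_le_add head tail'
    _ ≤ _ := by
      rw [← add_div]
      exact div_le_div_of_nonneg_right (by linarith [log_nonneg hS]) hD.le

/-- Lemma 2 (key lemma): for `0 ≤ y_i ≤ 1` and `S = 1 + ∑_{i=1}^{N−1} y_i`,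
`∑_{k=1}^{N−1} y_k/((N−k)(1 + ∑_{i=1}^{k} y_i)) ≤ (4·log S + 5)/max{S − 1, 1}`. -/
theorem key_series_bound
    (N : ℕ) (hN : 2 ≤ N) (y : ℕ → ℝ)
    (hy0 : ∀ i, 1 ≤ i → i ≤ N - 1 → 0 ≤ y i)
    (hy1 : ∀ i, 1 ≤ i → i ≤ N - 1 → y i ≤ 1) :
    ∑ k ∈ Icc 1 (N - 1),
        y k / (((N : ℝ) - (k : ℝ)) * (1 + ∑ i ∈ Icc 1 k, y i)) ≤
      (4 * Real.log (1 + ∑ i ∈ Icc 1 (N - 1), y i) + 5) /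
        max ((1 + ∑ i ∈ Icc 1 (N - 1), y i) - 1) 1 :=
  key_series_bound_general N y hy0 hy1
end

section
/- Let G > 0, R > 0, γ > 0, N ≥ 2, and let g¹, …, g^{N+1} ∈ ℝ^d satisfy ‖g^i‖ ≤ G. Let h = R/N^γ, let h_k = h/√(G² + ∑_{i=1}^{k} ‖g^i‖²) for k = 1, …, N and h_{N+1} := h_N, and let δ ∈ [0, 1/2] be defined by G²·N^{2δ} = G² + ∑_{i=1}^{N−1} ‖g^i‖². Define v_{N+1} = 1 and v_k = h_{N+1} / (∑_{i=k+1}^{N+1} h_i·v_i) for k = N down to 0. Then (1/(2·h_{N+1}))·∑_{k=1}^{N−1} h_k²·v_k²·‖g^k‖² ≤ (R·G/4)·N^{−γ}·√(N^{2δ} + 1)·(4·log(N^{2δ}) + 5)/max{N^{2δ} − 1, 1}. -/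
open Finset Real

/-!
Write `B_k = G² + ∑_{i ≤ k} ‖g^i‖²`, so that `h_k = h / √B_k`, and `S_k = ∑_{i > k} h_i v_i`,
so that `v_k = h_{N+1} / S_k`. As `S_{k-1} = S_k + h_k h_{N+1} / S_k` and `h_k ≥ h_{N+1}`, squaring gives
`S_k² ≥ (2(N - k) + 1) h_{N+1}²`, i.e. `v_k² ≤ 1 / (2(N - k) + 1)`, and the sum is at most
`h² ∑_k ‖g^k‖² / (B_k (2(N - k) + 1))`.

Put `A = N^{2δ} = B_{N-1} / G²`. The increments of `B` are at most `G²`, so the terms with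
`N - k ≤ A / 2` have `B_k ≥ G² A / 2` and add up to at most `H_{⌊A/2⌋} / A ≤ (1 + log A) / A`.
The remaining terms carry a weight below `1 / (A + 1)`, and `∑_k ‖g^k‖² / B_k ≤ log (B_{N-1} / B_0)
= log A` because `1 - 1/x ≤ log x`. Finally `1 / h_{N+1} = √B_N / h ≤ G √(A + 1) / h`.
-/

def gradAccum (c : ℝ) (a : ℕ → ℝ) (k : ℕ) : ℝ := c + ∑ i ∈ Icc 1 k, a i

section gradAccum

variable {c : ℝ} {a : ℕ → ℝ}

lemma gradAccum_zero : gradAccum c a 0 = c := by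
  simp [gradAccum]

lemma gradAccum_succ (k : ℕ) : gradAccum c a (k + 1) = gradAccum c a k + a (k + 1) := by
  rw [gradAccum, gradAccum, sum_Icc_succ_top (by omega), add_assoc]

lemma gradAccum_mono (ha : ∀ i, 0 ≤ a i) : Monotone (gradAccum c a) :=
  monotone_nat_of_le_succ fun k => by rw [gradAccum_succ]; linarith [ha (k + 1)]

lemma gradAccum_pos (hc : 0 < c) (ha : ∀ i, 0 ≤ a i) (k : ℕ) : 0 < gradAccum c a k :=
  hc.trans_le (by simpa only [gradAccum_zero] using gradAccum_mono (c := c) ha k.zero_le)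

lemma one_le_of_mul_eq_gradAccum {A : ℝ} {M : ℕ} (hc : 0 < c) (ha : ∀ i, 0 ≤ a i)
    (hA : c * A = gradAccum c a M) : 1 ≤ A := by
  have := gradAccum_mono (c := c) ha M.zero_le
  rw [← hA, gradAccum_zero] at this
  nlinarith

lemma gradAccum_succ_le_mul {A : ℝ} {M : ℕ} (hac : a (M + 1) ≤ c)
    (hA : c * A = gradAccum c a M) : gradAccum c a (M + 1) ≤ c * (A + 1) := by
  rw [gradAccum_succ, ← hA]
  linarith

lemma gradAccum_le_add {k M : ℕ} (hkM : k ≤ M) (hac : ∀ i ∈ Icc (k + 1) M, a i ≤ c) :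
    gradAccum c a M ≤ gradAccum c a k + ((M : ℝ) - k) * c := by
  induction M, hkM using Nat.le_induction with
  | base => simp
  | succ M hkM ih =>
    have hnext := hac (M + 1) (mem_Icc.2 ⟨by omega, le_rfl⟩)
    have hprev := ih fun i hi => hac i (Icc_subset_Icc_right (by omega) hi)
    rw [gradAccum_succ]
    push_cast
    linarith

lemma sum_div_gradAccum_le_log (hc : 0 < c) (ha : ∀ i, 0 ≤ a i) (M : ℕ) :
    ∑ k ∈ Icc 1 M, a k / gradAccum c a k ≤ log (gradAccum c a M / c) := by
  induction M with
  | zero => simp [gradAccum_zero, hc.ne']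
  | succ M ih =>
    have hB := gradAccum_pos hc ha M
    have hB' := gradAccum_pos hc ha (M + 1)
    have hstep : a (M + 1) / gradAccum c a (M + 1) ≤
        log (gradAccum c a (M + 1) / gradAccum c a M) := by
      have := one_sub_inv_le_log_of_pos (div_pos hB' hB)
      rwa [inv_div, one_sub_div hB'.ne', gradAccum_succ, add_sub_cancel_left, ← gradAccum_succ]
        at this
    rw [sum_Icc_succ_top (by omega),
      ← div_mul_div_cancel₀ (a := gradAccum c a (M + 1)) (c := c) hB.ne',
      log_mul (div_pos hB' hB).ne' (div_pos hB hc).ne']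
    linarith

end gradAccum

lemma sum_inv_sub_le_harmonic (N : ℕ) (x : ℝ) :
    ∑ k ∈ Icc 1 (N - 1), (if (N : ℝ) - k ≤ x then ((N : ℝ) - k)⁻¹ else 0) ≤ harmonic ⌊x⌋₊ := by
  set s : Finset ℕ := {k ∈ Icc 1 (N - 1) | (N : ℝ) - k ≤ x}
  have hs : ∀ k ∈ s, 1 ≤ k ∧ k < N ∧ (((N - k : ℕ) : ℝ)) ≤ x := fun k hk => by
    obtain ⟨hk, hkx⟩ := mem_filter.1 hk
    obtain ⟨hk1, hk2⟩ := mem_Icc.1 hk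
    exact ⟨hk1, by omega, by rwa [Nat.cast_sub (by omega)]⟩
  have hinj : Set.InjOn (N - ·) s := fun k hk l hl hkl => by
    have := hs k hk
    have := hs l hl
    simp only at hkl
    omega
  have himage : s.image (N - ·) ⊆ Icc 1 ⌊x⌋₊ := by
    intro j hj
    obtain ⟨k, hk, rfl⟩ := mem_image.1 hj
    obtain ⟨hk1, hkN, hkx⟩ := hs k hk
    exact mem_Icc.2 ⟨by omega, Nat.le_floor hkx⟩
  calc ∑ k ∈ Icc 1 (N - 1), (if (N : ℝ) - k ≤ x then ((N : ℝ) - k)⁻¹ else 0)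
      = ∑ k ∈ s, ((N - k : ℕ) : ℝ)⁻¹ := by
        rw [← sum_filter]
        exact sum_congr rfl fun k hk => by rw [Nat.cast_sub (hs k hk).2.1.le]
    _ = ∑ j ∈ s.image (N - ·), (j : ℝ)⁻¹ := (sum_image (f := fun j : ℕ => (j : ℝ)⁻¹) hinj).symm
    _ ≤ ∑ j ∈ Icc 1 ⌊x⌋₊, (j : ℝ)⁻¹ :=
        sum_le_sum_of_subset_of_nonneg himage fun j _ _ => by positivity
    _ = harmonic ⌊x⌋₊ := by simp [harmonic_eq_sum_Icc]

section oddWeights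

variable {c A : ℝ} {a : ℕ → ℝ} {N : ℕ}

lemma sum_div_gradAccum_mul_odd_le_log (hc : 0 < c) (ha : ∀ i, 0 ≤ a i)
    (hA : c * A = gradAccum c a (N - 1)) :
    ∑ k ∈ Icc 1 (N - 1), a k / (gradAccum c a k * (2 * ((N : ℝ) - k) + 1)) ≤ log A := by
  calc _ ≤ ∑ k ∈ Icc 1 (N - 1), a k / gradAccum c a k := sum_le_sum fun k hk => by
          have hkN : (k : ℝ) ≤ N := by
            have := (mem_Icc.1 hk).2
            exact_mod_cast (by omega : k ≤ N)
          have hB := gradAccum_pos hc ha k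
          exact div_le_div_of_nonneg_left (ha k) hB (le_mul_of_one_le_right hB.le (by linarith))
    _ ≤ log A := (sum_div_gradAccum_le_log hc ha _).trans_eq
        (by rw [← hA, mul_div_cancel_left₀ _ hc.ne'])

lemma div_gradAccum_mul_odd_le_of_le_half (hc : 0 < c) (ha : ∀ i, 0 ≤ a i)
    (hac : ∀ i ∈ Icc 1 (N - 1), a i ≤ c) (hA : c * A = gradAccum c a (N - 1)) {k : ℕ}
    (hk : k ∈ Icc 1 (N - 1)) (hnear : (N : ℝ) - k ≤ A / 2) :
    a k / (gradAccum c a k * (2 * ((N : ℝ) - k) + 1)) ≤ (A * ((N : ℝ) - k))⁻¹ := by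
  obtain ⟨hk1, hkN⟩ := mem_Icc.1 hk
  have hj : 1 ≤ (N : ℝ) - k := by
    rw [le_sub_iff_add_le']
    exact_mod_cast (by omega : k + 1 ≤ N)
  have hB := gradAccum_pos hc ha k
  have hlow : c * A ≤ gradAccum c a k + ((N : ℝ) - k - 1) * c := by
    have := gradAccum_le_add hkN fun i hi => hac i (Icc_subset_Icc_left (by omega) hi)
    rwa [← hA, Nat.cast_sub (by omega), Nat.cast_one, sub_right_comm] at this
  have hhalf : c * A ≤ 2 * gradAccum c a k := by
    nlinarith [mul_le_mul_of_nonneg_right (by linarith : (N : ℝ) - k - 1 ≤ A / 2 - 1) hc.le]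
  rw [← one_div, div_le_div_iff₀ (by positivity) (by nlinarith)]
  nlinarith [mul_le_mul_of_nonneg_right (hac k hk) (by nlinarith : 0 ≤ A * ((N : ℝ) - k))]

lemma div_gradAccum_mul_odd_le_of_half_lt (hc : 0 < c) (ha : ∀ i, 0 ≤ a i) (hA : 0 ≤ A) {k : ℕ}
    (hfar : A / 2 < (N : ℝ) - k) :
    a k / (gradAccum c a k * (2 * ((N : ℝ) - k) + 1)) ≤ a k / gradAccum c a k / (A + 1) := by
  have hB := gradAccum_pos hc ha k
  rw [div_div]
  exact div_le_div_of_nonneg_left (ha k) (by positivity)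
    (mul_le_mul_of_nonneg_left (by linarith) hB.le)

lemma sum_div_gradAccum_mul_odd_le_of_two_lt (hc : 0 < c) (ha : ∀ i, 0 ≤ a i)
    (hac : ∀ i ∈ Icc 1 (N - 1), a i ≤ c) (hA : c * A = gradAccum c a (N - 1)) (hA2 : 2 < A) :
    ∑ k ∈ Icc 1 (N - 1), a k / (gradAccum c a k * (2 * ((N : ℝ) - k) + 1)) ≤
      (4 * log A + 5) / (2 * (A - 1)) := by
  have hterm : ∀ k ∈ Icc 1 (N - 1), a k / (gradAccum c a k * (2 * ((N : ℝ) - k) + 1)) ≤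
      A⁻¹ * (if (N : ℝ) - k ≤ A / 2 then ((N : ℝ) - k)⁻¹ else 0) +
        a k / gradAccum c a k / (A + 1) := fun k hk => by
    split_ifs with hnear
    · rw [← mul_inv]
      exact (div_gradAccum_mul_odd_le_of_le_half hc ha hac hA hk hnear).trans
        (le_add_of_nonneg_right (by have := gradAccum_pos hc ha k; have := ha k; positivity))
    · rw [mul_zero, zero_add]
      exact div_gradAccum_mul_odd_le_of_half_lt hc ha (by linarith) (not_le.1 hnear)
  have hharmonic : (harmonic ⌊A / 2⌋₊ : ℝ) ≤ 1 + log A :=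
    (harmonic_floor_le_one_add_log _ (by linarith)).trans
      (by linarith [log_le_log (by positivity) (by linarith : A / 2 ≤ A)])
  have hL : 0 ≤ log A := log_nonneg (by linarith)
  calc _ ≤ _ := sum_le_sum hterm
    _ = A⁻¹ * ∑ k ∈ Icc 1 (N - 1), (if (N : ℝ) - k ≤ A / 2 then ((N : ℝ) - k)⁻¹ else 0) +
          (∑ k ∈ Icc 1 (N - 1), a k / gradAccum c a k) / (A + 1) := by
        rw [sum_add_distrib, mul_sum, sum_div]
    _ ≤ A⁻¹ * (1 + log A) + log A / (A + 1) := by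
        gcongr
        · exact (sum_inv_sub_le_harmonic N _).trans hharmonic
        · exact (sum_div_gradAccum_le_log hc ha _).trans_eq
            (by rw [← hA, mul_div_cancel_left₀ _ hc.ne'])
    _ ≤ (4 * log A + 5) / (2 * (A - 1)) := by
        rw [inv_mul_eq_div, div_add_div _ _ (by positivity) (by positivity),
          div_le_div_iff₀ (by positivity) (by nlinarith)]
        nlinarith [mul_nonneg hL (by linarith : (0 : ℝ) ≤ A - 2)]

theorem sum_div_gradAccum_mul_odd_le (hc : 0 < c) (ha : ∀ i, 0 ≤ a i)
    (hac : ∀ i ∈ Icc 1 (N - 1), a i ≤ c) (hA : c * A = gradAccum c a (N - 1)) :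
    ∑ k ∈ Icc 1 (N - 1), a k / (gradAccum c a k * (2 * ((N : ℝ) - k) + 1)) ≤
      (4 * log A + 5) / (2 * max (A - 1) 1) := by
  have hA1 := one_le_of_mul_eq_gradAccum hc ha hA
  rcases le_or_gt A 2 with hA2 | hA2
  · rw [max_eq_right (by linarith)]
    linarith [sum_div_gradAccum_mul_odd_le_log hc ha hA, log_nonneg hA1]
  · rw [max_eq_left (by linarith)]
    exact sum_div_gradAccum_mul_odd_le_of_two_lt hc ha hac hA hA2

end oddWeights

def tailSum (h v : ℕ → ℝ) (N k : ℕ) : ℝ := ∑ i ∈ Icc (k + 1) (N + 1), h i * v i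

section tailSum

variable {h v : ℕ → ℝ} {N : ℕ}

lemma tailSum_self : tailSum h v N N = h (N + 1) * v (N + 1) := by
  simp [tailSum]

lemma tailSum_eq_add {k : ℕ} (hk : k < N) :
    tailSum h v N k = h (k + 1) * v (k + 1) + tailSum h v N (k + 1) := by
  rw [tailSum, tailSum, Icc_eq_cons_Ioc (by omega), sum_cons, ← Icc_add_one_left_eq_Ioc]

lemma tailSum_pos_and_sq_ge (hH : 0 < h (N + 1)) (hlow : ∀ k, 1 ≤ k → k ≤ N → h (N + 1) ≤ h k)
    (hvN1 : v (N + 1) = 1) (hvrec : ∀ k, k ≤ N → v k = h (N + 1) / tailSum h v N k) {k : ℕ}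
    (hk : k ≤ N) :
    0 < tailSum h v N k ∧ h (N + 1) ^ 2 * (2 * ((N : ℝ) - k) + 1) ≤ tailSum h v N k ^ 2 := by
  induction hk using Nat.decreasingInduction with
  | self => simp [tailSum_self, hvN1, hH]
  | of_succ k hkN ih =>
    obtain ⟨hpos, hsq⟩ := ih
    have hHh := hlow (k + 1) (by omega) hkN
    have hcross : h (k + 1) * (h (N + 1) / tailSum h v N (k + 1)) * tailSum h v N (k + 1) =
        h (k + 1) * h (N + 1) := by field_simp
    rw [tailSum_eq_add hkN, hvrec (k + 1) hkN]
    refine ⟨by have := hH.trans_le hHh; positivity, ?_⟩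
    push_cast at hsq ⊢
    nlinarith [mul_le_mul_of_nonneg_left hHh hH.le,
      sq_nonneg (h (k + 1) * (h (N + 1) / tailSum h v N (k + 1)))]

lemma sq_weight_le (hH : 0 < h (N + 1)) (hlow : ∀ k, 1 ≤ k → k ≤ N → h (N + 1) ≤ h k)
    (hvN1 : v (N + 1) = 1) (hvrec : ∀ k, k ≤ N → v k = h (N + 1) / tailSum h v N k) {k : ℕ}
    (hk : k ≤ N) : v k ^ 2 ≤ (2 * ((N : ℝ) - k) + 1)⁻¹ := by
  obtain ⟨hpos, hsq⟩ := tailSum_pos_and_sq_ge hH hlow hvN1 hvrec hk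
  have hw : 0 < 2 * ((N : ℝ) - k) + 1 := by
    have : (k : ℝ) ≤ N := by exact_mod_cast hk
    linarith
  rw [hvrec k hk, div_pow, div_le_iff₀ (by positivity), inv_mul_eq_div, le_div_iff₀ hw]
  exact hsq

end tailSum

lemma sum_sq_step_mul_sq_weight_le {hb c : ℝ} {a h v : ℕ → ℝ} {N : ℕ} (hc : 0 < c)
    (ha : ∀ i, 0 ≤ a i) (hhb : 0 < hb)
    (hdef : ∀ k, 1 ≤ k → k ≤ N → h k = hb / √(gradAccum c a k)) (hlast : h (N + 1) = h N)
    (hvN1 : v (N + 1) = 1) (hvrec : ∀ k, k ≤ N → v k = h (N + 1) / tailSum h v N k) :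
    ∑ k ∈ Icc 1 (N - 1), h k ^ 2 * v k ^ 2 * a k ≤
      hb ^ 2 * ∑ k ∈ Icc 1 (N - 1), a k / (gradAccum c a k * (2 * ((N : ℝ) - k) + 1)) := by
  rw [mul_sum]
  refine sum_le_sum fun k hk => ?_
  obtain ⟨hk1, hkN⟩ := mem_Icc.1 hk
  have hB := gradAccum_pos hc ha
  have hH : h (N + 1) = hb / √(gradAccum c a N) := hlast.trans (hdef N (by omega) le_rfl)
  have hlow : ∀ j, 1 ≤ j → j ≤ N → h (N + 1) ≤ h j := fun j hj1 hjN => by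
    rw [hH, hdef j hj1 hjN]
    exact div_le_div_of_nonneg_left hhb.le (sqrt_pos.2 (hB j))
      (sqrt_le_sqrt (gradAccum_mono ha hjN))
  have hv := sq_weight_le (by rw [hH]; have := hB N; positivity) hlow hvN1 hvrec
    (by omega : k ≤ N)
  calc h k ^ 2 * v k ^ 2 * a k = hb ^ 2 / gradAccum c a k * a k * v k ^ 2 := by
        rw [hdef k hk1 (by omega), div_pow, sq_sqrt (hB k).le]
        ring
    _ ≤ hb ^ 2 / gradAccum c a k * a k * (2 * ((N : ℝ) - k) + 1)⁻¹ :=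
        mul_le_mul_of_nonneg_left hv (by have := hB k; have := ha k; positivity)
    _ = hb ^ 2 * (a k / (gradAccum c a k * (2 * ((N : ℝ) - k) + 1))) := by
        field_simp

theorem adagrad_weighted_gradient_sum_bound_general
    (d : ℕ) (G R γ δ : ℝ) (N : ℕ)
    (hG : 0 < G) (hR : 0 < R) (hN : 2 ≤ N)
    (g : ℕ → EuclideanSpace ℝ (Fin d))
    (hgbound : ∀ i, 1 ≤ i → i ≤ N + 1 → ‖g i‖ ≤ G)
    (h : ℕ → ℝ)
    (hdef : ∀ k, 1 ≤ k → k ≤ N →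
      h k = R / (N : ℝ) ^ γ / Real.sqrt (G ^ 2 + ∑ i ∈ Icc 1 k, ‖g i‖ ^ 2))
    (hlast : h (N + 1) = h N)
    (v : ℕ → ℝ)
    (hvN1 : v (N + 1) = 1)
    (hvrec : ∀ k, k ≤ N → v k = h (N + 1) / ∑ i ∈ Icc (k + 1) (N + 1), h i * v i)
    (hδ : G ^ 2 * (N : ℝ) ^ (2 * δ) = G ^ 2 + ∑ i ∈ Icc 1 (N - 1), ‖g i‖ ^ 2) :
    1 / (2 * h (N + 1)) * ∑ k ∈ Icc 1 (N - 1), (h k) ^ 2 * (v k) ^ 2 * ‖g k‖ ^ 2 ≤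
      R * G / 4 * (N : ℝ) ^ (-γ) * Real.sqrt ((N : ℝ) ^ (2 * δ) + 1) *
        (4 * Real.log ((N : ℝ) ^ (2 * δ)) + 5) / max ((N : ℝ) ^ (2 * δ) - 1) 1 := by
  set a : ℕ → ℝ := fun i => ‖g i‖ ^ 2
  set A : ℝ := (N : ℝ) ^ (2 * δ)
  set hb : ℝ := R / (N : ℝ) ^ γ with hb_def
  have hc : 0 < G ^ 2 := by positivity
  have ha : ∀ i, 0 ≤ a i := fun i => by positivity
  have hac : ∀ i ∈ Icc 1 N, a i ≤ G ^ 2 := fun i hi => by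
    obtain ⟨hi1, hiN⟩ := mem_Icc.1 hi
    exact pow_le_pow_left₀ (norm_nonneg _) (hgbound i hi1 (by omega)) 2
  have hhb : 0 < hb := by positivity
  have hstep : ∀ k, 1 ≤ k → k ≤ N → h k = hb / √(gradAccum (G ^ 2) a k) := hdef
  have hA : G ^ 2 * A = gradAccum (G ^ 2) a (N - 1) := hδ
  have hlogA : 0 ≤ log A := log_nonneg (one_le_of_mul_eq_gradAccum hc ha hA)
  have hBN : √(gradAccum (G ^ 2) a N) ≤ G * √(A + 1) := by
    have hN1 : N - 1 + 1 = N := by omega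
    calc √(gradAccum (G ^ 2) a N) ≤ √(G ^ 2 * (A + 1)) := sqrt_le_sqrt <| hN1 ▸
          gradAccum_succ_le_mul (hac _ (mem_Icc.2 ⟨by omega, by omega⟩)) hA
      _ = G * √(A + 1) := by rw [sqrt_mul hc.le, sqrt_sq hG.le]
  have hHinv : 1 / (2 * h (N + 1)) = √(gradAccum (G ^ 2) a N) / (2 * hb) := by
    rw [hlast, hstep N (by omega) le_rfl]
    field_simp
  calc 1 / (2 * h (N + 1)) * ∑ k ∈ Icc 1 (N - 1), h k ^ 2 * v k ^ 2 * a k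
      ≤ √(gradAccum (G ^ 2) a N) / (2 * hb) *
          (hb ^ 2 * ((4 * log A + 5) / (2 * max (A - 1) 1))) := by
        rw [hHinv]
        gcongr
        refine (sum_sq_step_mul_sq_weight_le hc ha hhb hstep hlast hvN1 hvrec).trans ?_
        gcongr
        exact sum_div_gradAccum_mul_odd_le hc ha
          (fun i hi => hac i (Icc_subset_Icc_right (Nat.sub_le N 1) hi)) hA
    _ ≤ G * √(A + 1) / (2 * hb) * (hb ^ 2 * ((4 * log A + 5) / (2 * max (A - 1) 1))) := by
        gcongr
    _ = _ := by
        rw [rpow_neg (Nat.cast_nonneg N), hb_def]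
        field_simp
        ring

/-- Inequality (neq2): with AdaGrad stepsizes `h_k = h/√(G² + ∑_{i=1}^{k}‖g^i‖²)`,
`h = R/N^γ`, convention `h_{N+1} := h_N`, the backward-recursive weights `v_k`,
and `δ` defined by `G²·N^{2δ} = G² + ∑_{i=1}^{N−1}‖g^i‖²`, one has
`(1/(2h_{N+1})) ∑_{k=1}^{N−1} h_k² v_k² ‖g^k‖² ≤
  (RG/4)·N^{−γ}·√(N^{2δ}+1)·(4·log(N^{2δ}) + 5)/max{N^{2δ}−1, 1}`. -/
theorem adagrad_weighted_gradient_sum_bound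
    (d : ℕ) (G R γ δ : ℝ) (N : ℕ)
    (hG : 0 < G) (hR : 0 < R) (hγ : 0 < γ) (hN : 2 ≤ N)
    (g : ℕ → EuclideanSpace ℝ (Fin d))
    (hgbound : ∀ i, 1 ≤ i → i ≤ N + 1 → ‖g i‖ ≤ G)
    (h : ℕ → ℝ)
    (hdef : ∀ k, 1 ≤ k → k ≤ N →
      h k = R / (N : ℝ) ^ γ / Real.sqrt (G ^ 2 + ∑ i ∈ Icc 1 k, ‖g i‖ ^ 2))
    (hlast : h (N + 1) = h N)
    (v : ℕ → ℝ)
    (hvN1 : v (N + 1) = 1)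
    (hvrec : ∀ k, k ≤ N → v k = h (N + 1) / ∑ i ∈ Icc (k + 1) (N + 1), h i * v i)
    (hδ0 : 0 ≤ δ) (hδhalf : δ ≤ 1 / 2)
    (hδ : G ^ 2 * (N : ℝ) ^ (2 * δ) = G ^ 2 + ∑ i ∈ Icc 1 (N - 1), ‖g i‖ ^ 2) :
    1 / (2 * h (N + 1)) * ∑ k ∈ Icc 1 (N - 1), (h k) ^ 2 * (v k) ^ 2 * ‖g k‖ ^ 2 ≤
      R * G / 4 * (N : ℝ) ^ (-γ) * Real.sqrt ((N : ℝ) ^ (2 * δ) + 1) *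
        (4 * Real.log ((N : ℝ) ^ (2 * δ)) + 5) / max ((N : ℝ) ^ (2 * δ) - 1) 1 :=
  adagrad_weighted_gradient_sum_bound_general d G R γ δ N hG hR hN g hgbound h hdef hlast v hvN1
    hvrec hδ
end

section
/- Let G > 0, R > 0, γ > 0, N ≥ 1, a ∈ ℝ, and f(x) = G·|x − a| on ℝ. Run AdaGrad started at x¹ = a with base stepsize h = R/N^γ, stepsizes h_k = h/√(G² + ∑_{i=1}^{k} (g^i)²), and subgradient choices g^k = 0 for k = 1, …, N−1 and g^N = G (valid subgradients since ∂f(a) = [−G, G]). Then f(x^{N+1}) − min_{x∈ℝ} f(x) = G·R/(√2·N^γ). -/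
open Finset

/-- Lower bound, Case 1 building block: AdaGrad on `f(x) = G·|x − a|` started at
`x¹ = a` with base stepsize `h = R/N^γ`, subgradients `g^k = 0` for
`k = 1, …, N−1` and `g^N = G`, has last-iterate suboptimality exactly
`G·R/(√2·N^γ)`. -/
theorem adagrad_abs_value_lower_bound
    (G R γ a : ℝ) (hG : 0 < G) (hR : 0 < R) (hγ : 0 < γ)
    (N : ℕ) (hN : 1 ≤ N)
    (x g : ℕ → ℝ)
    (hx1 : x 1 = a)
    (hg0 : ∀ k, 1 ≤ k → k ≤ N - 1 → g k = 0)
    (hgN : g N = G)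
    (hupd : ∀ k, 1 ≤ k → k ≤ N →
      x (k + 1) = x k -
        (R / (N : ℝ) ^ γ / Real.sqrt (G ^ 2 + ∑ i ∈ Icc 1 k, (g i) ^ 2)) * g k) :
    G * |x (N + 1) - a| - (⨅ y : ℝ, G * |y - a|) =
      G * R / (Real.sqrt 2 * (N : ℝ) ^ γ) := by
  -- the infimum is 0
  have hinf : (⨅ y : ℝ, G * |y - a|) = 0 := by
    apply le_antisymm
    · have := ciInf_le (f := fun y : ℝ => G * |y - a|)
        ⟨0, fun z hz => by rcases hz with ⟨y, rfl⟩; positivity⟩ a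
      simpa using this
    · exact le_ciInf fun y => by positivity
  -- iterates stay at a up to N
  have hxa : ∀ k, 1 ≤ k → k ≤ N → x k = a := by
    intro k
    induction k with
    | zero => intro h; omega
    | succ n ih =>
      intro _ hn1
      rcases Nat.eq_or_lt_of_le (Nat.one_le_iff_ne_zero.mpr (by omega) : 1 ≤ n + 1) with h | h
      · rw [← h]; exact hx1
      · have hn : 1 ≤ n := by omega
        have hnN : n ≤ N := by omega
        have hg : g n = 0 := hg0 n hn (by omega)
        rw [hupd n hn hnN, hg, mul_zero, sub_zero]
        exact ih hn hnN
  -- the sum of squared gradients at step N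
  have hsum : (∑ i ∈ Icc 1 N, (g i) ^ 2) = G ^ 2 := by
    have hins : Icc 1 N = insert N (Icc 1 (N - 1)) := by
      ext i; simp [mem_Icc, mem_insert]; omega
    rw [hins, Finset.sum_insert (by simp [mem_Icc]; omega), hgN]
    have : ∀ i ∈ Icc 1 (N - 1), (g i) ^ 2 = 0 := by
      intro i hi; rw [mem_Icc] at hi; rw [hg0 i hi.1 hi.2]; ring
    rw [Finset.sum_congr rfl this]
    simp
  have hsqrt : Real.sqrt (G ^ 2 + G ^ 2) = Real.sqrt 2 * G := by
    rw [show G ^ 2 + G ^ 2 = 2 * G ^ 2 by ring, Real.sqrt_mul (by norm_num),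
      Real.sqrt_sq hG.le]
  have hxN1 : x (N + 1) = a - R / (N : ℝ) ^ γ / Real.sqrt 2 := by
    rw [hupd N hN le_rfl, hxa N hN le_rfl, hsum, hgN, hsqrt]
    have hG' : G ≠ 0 := hG.ne'
    have h2 : Real.sqrt 2 ≠ 0 := by positivity
    field_simp
  rw [hinf, hxN1]
  have hNpos : (0:ℝ) < (N : ℝ) ^ γ := by
    apply Real.rpow_pos_of_pos; exact_mod_cast Nat.lt_of_lt_of_le Nat.zero_lt_one hN
  have h2 : (0:ℝ) < Real.sqrt 2 := by positivity
  rw [show a - R / (N : ℝ) ^ γ / Real.sqrt 2 - a = -(R / (N : ℝ) ^ γ / Real.sqrt 2) by ring,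
    abs_neg, abs_of_pos (by positivity)]
  field_simp
  ring
end

section
/- Let G > 0, R > 0, γ > 0, N ≥ 1, let d = max{⌈16·N^{1−2γ}⌉, 1}, and let f(x) = G·‖x‖_∞ on ℝ^d. Start AdaGrad at x¹ = (R/√d, …, R/√d) with base stepsize h = R/N^γ, and at each step k = 1, …, N choose g^k = G·σ_k·e_{i_k}, where i_k is an index with |x^k_{i_k}| = ‖x^k‖_∞ and σ_k ∈ {−1, +1} satisfies σ_k·x^k_{i_k} = |x^k_{i_k}| (so g^k is a subgradient of f at x^k with ‖g^k‖ = ‖g^k‖₁ = G, and h_k = h/(G·√(1 + k))). Then the iterates x^{k+1} = x^k − h_k·g^k satisfy f(x^{N+1}) − min_{x∈ℝ^d} f(x) = G·‖x^{N+1}‖_∞ ≥ G·R/(2·√d). -/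
/-!
Each AdaGrad step moves a single coordinate, by `h_k G = h / √(k + 1)`, so it lowers the
`ℓ¹` norm by at most that much. The `ℓ¹` norm starts at `R √d`, and the total decrease
`∑_{k ≤ N} h / √(k + 1) ≤ 2 h √N = 2 R N^{1/2 - γ}` is at most `R √d / 2` by the choice of `d`.
Hence `‖x^{N+1}‖₁ ≥ R √d / 2`, and `‖x^{N+1}‖_∞ ≥ ‖x^{N+1}‖₁ / d ≥ R / (2 √d)`.
-/

open Finset

lemma one_div_sqrt_succ_le_two_mul_sub (m : ℕ) :
    1 / √((m : ℝ) + 1) ≤ 2 * (√((m : ℝ) + 1) - √m) := by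
  have hpos : 0 < √((m : ℝ) + 1) := Real.sqrt_pos.mpr (by positivity)
  have hsq : √((m : ℝ) + 1) ^ 2 = m + 1 := Real.sq_sqrt (by positivity)
  have hsq' : √(m : ℝ) ^ 2 = m := Real.sq_sqrt (by positivity)
  have hle : √(m : ℝ) ≤ √((m : ℝ) + 1) := Real.sqrt_le_sqrt (by linarith)
  rw [div_le_iff₀ hpos]
  nlinarith [sq_nonneg (√((m : ℝ) + 1) - √m)]

lemma sum_Icc_one_div_sqrt_succ_le (n : ℕ) :
    ∑ m ∈ Icc 1 n, 1 / √((m : ℝ) + 1) ≤ 2 * √n := by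
  induction n with
  | zero => simp
  | succ n ih =>
    rw [sum_Icc_succ_top (by omega)]
    have hmono : 1 / √((n : ℝ) + 1 + 1) ≤ 1 / √((n : ℝ) + 1) :=
      one_div_le_one_div_of_le (Real.sqrt_pos.mpr (by positivity))
        (Real.sqrt_le_sqrt (by linarith))
    push_cast
    linarith [one_div_sqrt_succ_le_two_mul_sub n]

lemma sub_sum_Icc_le_of_sub_le_succ {S δ : ℕ → ℝ} {N : ℕ}
    (h : ∀ k, 1 ≤ k → k ≤ N → S k - δ k ≤ S (k + 1)) :
    S 1 - ∑ k ∈ Icc 1 N, δ k ≤ S (N + 1) := by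
  induction N with
  | zero => simp
  | succ N ih =>
    rw [sum_Icc_succ_top (by omega)]
    linarith [ih fun k hk hkN => h k hk (by omega), h (N + 1) (by omega) le_rfl]

lemma sub_two_mul_mul_sqrt_le_of_sub_le_succ {S : ℕ → ℝ} {h : ℝ} {N : ℕ} (hh : 0 ≤ h)
    (hS : ∀ k, 1 ≤ k → k ≤ N → S k - h / √((k : ℝ) + 1) ≤ S (k + 1)) :
    S 1 - h * (2 * √N) ≤ S (N + 1) := by
  have hdescent := sub_sum_Icc_le_of_sub_le_succ hS
  simp_rw [← mul_one_div h, ← mul_sum] at hdescent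
  nlinarith [sum_Icc_one_div_sqrt_succ_le N]

lemma sum_abs_div_sqrt_card {ι : Type*} [Fintype ι] {y : ι → ℝ} {R : ℝ} (hR : 0 ≤ R)
    (hy : ∀ j, y j = R / √(Fintype.card ι)) : ∑ j, |y j| = R * √(Fintype.card ι) := by
  simp only [hy, abs_div, abs_of_nonneg hR, abs_of_nonneg (Real.sqrt_nonneg _), sum_const,
    card_univ, nsmul_eq_mul]
  rw [mul_div_left_comm, Real.div_sqrt]

lemma sum_abs_sub_le_sum_abs_sub_smul_single {ι : Type*} [Fintype ι] [DecidableEq ι]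
    (v : EuclideanSpace ℝ ι) (i : ι) (c a : ℝ) :
    ∑ j, |v j| - |c * a| ≤ ∑ j, |(v - c • EuclideanSpace.single i a) j| := by
  have hsingle : ∑ j, |(c • EuclideanSpace.single i a) j| = |c * a| := by
    simp [PiLp.single_apply, apply_ite]
  rw [← hsingle, sub_le_iff_le_add, ← sum_add_distrib]
  gcongr with j
  simpa using abs_sub_abs_le_abs_sub (v j) ((c • EuclideanSpace.single i a) j)

lemma sum_abs_le_card_mul_iSup_abs {ι : Type*} [Fintype ι] (y : ι → ℝ) :
    ∑ j, |y j| ≤ Fintype.card ι * ⨆ j, |y j| := by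
  rw [← nsmul_eq_mul]
  exact sum_le_card_nsmul _ _ _ fun j _ => le_ciSup (Finite.bddAbove_range fun j => |y j|) j

lemma iInf_mul_iSup_abs_eq_zero {ι : Type*} [Finite ι] {G : ℝ} (hG : 0 ≤ G) :
    ⨅ y : EuclideanSpace ℝ ι, G * ⨆ j, |y j| = 0 := by
  have hnonneg : ∀ y : EuclideanSpace ℝ ι, 0 ≤ G * ⨆ j, |y j| :=
    fun y => mul_nonneg hG (Real.iSup_nonneg fun j => abs_nonneg _)
  refine le_antisymm ?_ (le_ciInf hnonneg)
  calc ⨅ y : EuclideanSpace ℝ ι, G * ⨆ j, |y j|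
      ≤ G * ⨆ j, |(0 : EuclideanSpace ℝ ι) j| :=
        ciInf_le ⟨0, Set.forall_mem_range.mpr hnonneg⟩ 0
    _ = 0 := by simp

lemma sqrt_sq_add_sum_sq_norm_eq {E : Type*} [SeminormedAddCommGroup E] {G : ℝ} (hG : 0 ≤ G)
    {g : ℕ → E} {k : ℕ} (hg : ∀ m ∈ Icc 1 k, ‖g m‖ = G) :
    √(G ^ 2 + ∑ m ∈ Icc 1 k, ‖g m‖ ^ 2) = G * √((k : ℝ) + 1) := by
  rw [sum_congr rfl fun m hm => by rw [hg m hm], sum_const, Nat.card_Icc, nsmul_eq_mul,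
    show G ^ 2 + ((k + 1 - 1 : ℕ) : ℝ) * G ^ 2 = G ^ 2 * (k + 1) by push_cast; ring,
    Real.sqrt_mul (sq_nonneg G), Real.sqrt_sq hG]

lemma sum_abs_sub_le_sum_abs_adagrad_step {ι : Type*} [Fintype ι] [DecidableEq ι]
    (v : EuclideanSpace ℝ ι) (i : ι) {G h s : ℝ} (hG : 0 < G) (hh : 0 ≤ h) (hs : |s| = 1)
    {g : ℕ → EuclideanSpace ℝ ι} {k : ℕ} (hg : ∀ m ∈ Icc 1 k, ‖g m‖ = G)
    (hgk : g k = EuclideanSpace.single i (G * s)) :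
    ∑ j, |v j| - h / √((k : ℝ) + 1) ≤
      ∑ j, |(v - (h / √(G ^ 2 + ∑ m ∈ Icc 1 k, ‖g m‖ ^ 2)) • g k) j| := by
  have hmove : |h / (G * √((k : ℝ) + 1)) * (G * s)| = h / √((k : ℝ) + 1) := by
    rw [abs_mul, abs_mul, hs, abs_of_pos hG, abs_of_nonneg (by positivity)]
    field_simp
  rw [hgk, sqrt_sq_add_sum_sq_norm_eq hG.le hg, ← hmove]
  exact sum_abs_sub_le_sum_abs_sub_smul_single _ _ _ _

lemma div_sqrt_card_le_iSup_abs {ι : Type*} [Fintype ι] [Nonempty ι] {y : ι → ℝ} {c : ℝ}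
    (hy : c * √(Fintype.card ι) ≤ ∑ j, |y j|) : c / √(Fintype.card ι) ≤ ⨆ j, |y j| := by
  have hcard := sum_abs_le_card_mul_iSup_abs y
  have hpos : 0 < √(Fintype.card ι : ℝ) := Real.sqrt_pos.mpr (by exact_mod_cast Fintype.card_pos)
  rw [← Real.mul_self_sqrt (Nat.cast_nonneg (Fintype.card ι))] at hcard
  rw [div_le_iff₀ hpos]
  nlinarith

lemma div_rpow_mul_two_sqrt_le {N R d γ : ℝ} (hN : 0 < N) (hR : 0 ≤ R)
    (hd : 16 * N ^ (1 - 2 * γ) ≤ d) : R / N ^ γ * (2 * √N) ≤ R / 2 * √d := by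
  have hsqrt : √(16 * N ^ (1 - 2 * γ)) = 4 * √N / N ^ γ := by
    rw [Real.sqrt_mul (by norm_num), show (16 : ℝ) = 4 ^ 2 by norm_num,
      Real.sqrt_sq (by norm_num), Real.sqrt_eq_rpow, Real.sqrt_eq_rpow,
      ← Real.rpow_mul hN.le, show (1 - 2 * γ) * (1 / 2) = 1 / 2 - γ by ring,
      Real.rpow_sub hN, mul_div_assoc]
  calc R / N ^ γ * (2 * √N) = R / 2 * √(16 * N ^ (1 - 2 * γ)) := by rw [hsqrt]; ring
    _ ≤ R / 2 * √d := by gcongr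

theorem adagrad_linf_lower_bound_general
    (G R γ : ℝ) (hG : 0 < G) (hR : 0 < R)
    (N d : ℕ) (hN : 1 ≤ N)
    (hd : d = max ⌈16 * (N : ℝ) ^ ((1 : ℝ) - 2 * γ)⌉₊ 1)
    (x g : ℕ → EuclideanSpace ℝ (Fin d))
    (i : ℕ → Fin d) (σ : ℕ → ℝ)
    (hx1 : ∀ j, x 1 j = R / Real.sqrt d)
    (hσ : ∀ k, 1 ≤ k → k ≤ N → σ k = 1 ∨ σ k = -1)
    (hg : ∀ k, 1 ≤ k → k ≤ N → g k = EuclideanSpace.single (i k) (G * σ k))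
    (hupd : ∀ k, 1 ≤ k → k ≤ N →
      x (k + 1) = x k -
        (R / (N : ℝ) ^ γ / Real.sqrt (G ^ 2 + ∑ i' ∈ Icc 1 k, ‖g i'‖ ^ 2)) • g k) :
    G * (⨆ j, |x (N + 1) j|) -
        (⨅ y : EuclideanSpace ℝ (Fin d), G * ⨆ j, |y j|) =
      G * (⨆ j, |x (N + 1) j|) ∧
    G * (⨆ j, |x (N + 1) j|) ≥ G * R / (2 * Real.sqrt d) := by
  have hd_pos : 0 < d := by rw [hd]; positivity
  have : Nonempty (Fin d) := Fin.pos_iff_nonempty.mp hd_pos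
  have hσ_abs : ∀ k, 1 ≤ k → k ≤ N → |σ k| = 1 := fun k hk hkN => by
    rcases hσ k hk hkN with hs | hs <;> simp [hs]
  have hgnorm : ∀ k, 1 ≤ k → k ≤ N → ‖g k‖ = G := fun k hk hkN => by
    rw [hg k hk hkN, PiLp.norm_single, Real.norm_eq_abs, abs_mul, hσ_abs k hk hkN,
      abs_of_pos hG, mul_one]
  have hstep : ∀ k, 1 ≤ k → k ≤ N → ∑ j, |x k j| - R / (N : ℝ) ^ γ / √((k : ℝ) + 1) ≤
      ∑ j, |x (k + 1) j| := fun k hk hkN => by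
    rw [hupd k hk hkN]
    exact sum_abs_sub_le_sum_abs_adagrad_step _ _ hG (by positivity) (hσ_abs k hk hkN)
      (fun m hm => hgnorm m (mem_Icc.mp hm).1 ((mem_Icc.mp hm).2.trans hkN)) (hg k hk hkN)
  have hdim : 16 * (N : ℝ) ^ ((1 : ℝ) - 2 * γ) ≤ d := by
    rw [hd, Nat.cast_max]
    exact (Nat.le_ceil _).trans (le_max_left _ _)
  have hl1 : R / 2 * √(Fintype.card (Fin d)) ≤ ∑ j, |x (N + 1) j| := by
    have hstart := sum_abs_div_sqrt_card hR.le (y := fun j => x 1 j) (by simpa using hx1)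
    have hdescent := sub_two_mul_mul_sqrt_le_of_sub_le_succ (by positivity) hstep
    rw [Fintype.card_fin] at hstart ⊢
    linarith [div_rpow_mul_two_sqrt_le (by exact_mod_cast hN) hR.le hdim]
  refine ⟨by rw [iInf_mul_iSup_abs_eq_zero hG.le, sub_zero], ?_⟩
  have hsup := div_sqrt_card_le_iSup_abs hl1
  rw [Fintype.card_fin] at hsup
  rw [ge_iff_le, mul_div_assoc, ← div_div]
  exact mul_le_mul_of_nonneg_left hsup hG.le

/-- Lower bound, Case 2: for AdaGrad on `f(x) = G‖x‖_∞` in dimension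
`d = max{⌈16·N^{1−2γ}⌉, 1}`, started at `x¹ = (R/√d, …, R/√d)` with `h = R/N^γ`
and coordinate-wise subgradients `g^k = G·σ_k·e_{i_k}`, the last iterate satisfies
`f(x^{N+1}) − min f = G‖x^{N+1}‖_∞ ≥ GR/(2√d)`. -/
theorem adagrad_linf_lower_bound
    (G R γ : ℝ) (hG : 0 < G) (hR : 0 < R) (hγ : 0 < γ)
    (N d : ℕ) (hN : 1 ≤ N)
    (hd : d = max ⌈16 * (N : ℝ) ^ ((1 : ℝ) - 2 * γ)⌉₊ 1)
    (x g : ℕ → EuclideanSpace ℝ (Fin d))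
    (i : ℕ → Fin d) (σ : ℕ → ℝ)
    (hx1 : ∀ j, x 1 j = R / Real.sqrt d)
    (hσ : ∀ k, 1 ≤ k → k ≤ N → σ k = 1 ∨ σ k = -1)
    (hmax : ∀ k, 1 ≤ k → k ≤ N → |x k (i k)| = ⨆ j, |x k j|)
    (hsign : ∀ k, 1 ≤ k → k ≤ N → σ k * x k (i k) = |x k (i k)|)
    (hg : ∀ k, 1 ≤ k → k ≤ N → g k = EuclideanSpace.single (i k) (G * σ k))
    (hupd : ∀ k, 1 ≤ k → k ≤ N →
      x (k + 1) = x k -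
        (R / (N : ℝ) ^ γ / Real.sqrt (G ^ 2 + ∑ i' ∈ Icc 1 k, ‖g i'‖ ^ 2)) • g k) :
    G * (⨆ j, |x (N + 1) j|) -
        (⨅ y : EuclideanSpace ℝ (Fin d), G * ⨆ j, |y j|) =
      G * (⨆ j, |x (N + 1) j|) ∧
    G * (⨆ j, |x (N + 1) j|) ≥ G * R / (2 * Real.sqrt d) :=
  adagrad_linf_lower_bound_general G R γ hG hR N d hN hd x g i σ hx1 hσ hg hupd
end

section
/- For every γ > 0, G > 0, R > 0, and natural N ≥ 1, there exist a dimension d ≥ 1, a convex function f : ℝ^d → ℝ with G-bounded subgradients, a minimizer x* of f over ℝ^d, a starting point x¹ with ‖x¹ − x*‖ ≤ R, and a sequence g¹, …, g^N with each g^k a subgradient of f at x^k, such that the AdaGrad iterates x^{k+1} = x^k − h_k·g^k with h_k = h/√(G² + ∑_{i=1}^{k} ‖g^i‖²) and h = R/N^γ satisfy f(x^{N+1}) − f(x*) ≥ (1/9)·max{ G·R·N^{−γ}, min{ G·R·N^{γ − 1/2}, G·R } }. -/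
/-!
Each term of the maximum is witnessed by its own instance. For `G * R * N ^ (-γ)`, take
`f = G ‖·‖` on `ℝ¹`, start at the minimizer `0` and feed the zero subgradient until the last
step, where the subgradient `G e₀` makes AdaGrad jump a distance `h / √2`.

For the second term let `κ = min (N ^ (γ - 1/2)) 1` and `f y = G · maxⱼ (y j)⁻` on `ℝᵈ` with
`d ≈ 9 / κ²`, started at `(-R/√d, …, -R/√d)`, and always choose the subgradient `-G eⱼ` at a
smallest coordinate `j`. Every subgradient has norm `G`, so step `k` adds `h / √(k + 1)` to a
smallest coordinate. The total movement `≤ 2 h √N ≤ 2 R / κ` is spread over `d` coordinates,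
so the smallest one stays below `-R/√d + 2R/(κ d) ≤ -R κ / 9`.
-/

open Finset Real
open scoped InnerProductSpace

theorem ConvexOn.finset_sup' {E ι : Type*} [AddCommGroup E] [Module ℝ E] {s : Set E}
    {t : Finset ι} (ht : t.Nonempty) {f : ι → E → ℝ} (hs : Convex ℝ s)
    (hf : ∀ i ∈ t, ConvexOn ℝ s (f i)) :
    ConvexOn ℝ s fun x => t.sup' ht (f · x) := by
  refine ⟨hs, fun x hx y hy a b ha hb hab => sup'_le _ _ fun i hi => ?_⟩
  calc f i (a • x + b • y) ≤ a • f i x + b • f i y := (hf i hi).2 hx hy ha hb hab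
    _ ≤ a • t.sup' ht (f · x) + b • t.sup' ht (f · y) := by
      gcongr <;> exact le_sup' (f · _) hi

theorem LipschitzWith.finset_sup' {α ι : Type*} [PseudoMetricSpace α] {t : Finset ι}
    (ht : t.Nonempty) {f : ι → α → ℝ} {K : NNReal} (hf : ∀ i ∈ t, LipschitzWith K (f i)) :
    LipschitzWith K fun x => t.sup' ht (f · x) :=
  LipschitzWith.of_le_add_mul K fun x y => sup'_le _ _ fun i hi =>
    ((hf i hi).le_add_mul x y).trans (by gcongr; exact le_sup' (f · y) hi)

theorem sum_range_inv_sqrt_succ_le (n : ℕ) : ∑ i ∈ range n, 1 / √(i + 1) ≤ 2 * √n := by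
  induction n with
  | zero => simp
  | succ n ih =>
    have hpos : 0 < √(n + 1) := by positivity
    have hstep : 1 / √(n + 1) ≤ 2 * √(n + 1) - 2 * √n := by
      rw [div_le_iff₀ hpos]
      nlinarith [sq_sqrt (n.cast_nonneg : (0 : ℝ) ≤ n), sq_sqrt (by positivity : (0 : ℝ) ≤ n + 1),
        sq_nonneg (√(n + 1) - √n)]
    rw [sum_range_succ]
    push_cast
    linarith

theorem sum_range_div_sqrt_add_two_le {h : ℝ} (hh : 0 ≤ h) {m N : ℕ} (hm : m ≤ N) :
    ∑ i ∈ range m, h / √(i + 2) ≤ 2 * h * √N := calc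
  _ ≤ ∑ i ∈ range m, h * (1 / √(i + 1)) :=
      sum_le_sum fun i _ => by rw [mul_one_div]; gcongr; linarith
  _ ≤ h * (2 * √m) := by rw [← mul_sum]; gcongr; exact sum_range_inv_sqrt_succ_le m
  _ ≤ 2 * h * √N := by rw [mul_left_comm, ← mul_assoc]; gcongr

section Subgradient

variable {E : Type*} [NormedAddCommGroup E] [InnerProductSpace ℝ E]

def HasSubgradientAt (f : E → ℝ) (s z : E) : Prop :=
  ∀ y, f z + ⟪s, y - z⟫_ℝ ≤ f y

theorem HasSubgradientAt.norm_le {f : E → ℝ} {K : NNReal} {s z : E}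
    (hs : HasSubgradientAt f s z) (hf : LipschitzWith K f) : ‖s‖ ≤ K := by
  have hlow := hs (z + s)
  have hup := hf.le_add_mul (z + s) z
  rw [add_sub_cancel_left, real_inner_self_eq_norm_sq] at hlow
  rw [dist_eq_norm, add_sub_cancel_left] at hup
  rcases (norm_nonneg s).eq_or_lt with hzero | hpos
  · exact hzero ▸ K.2
  · nlinarith

theorem HasSubgradientAt.norm_le_of_const_mul {φ : E → ℝ} {c : ℝ} {s z : E} (hc : 0 ≤ c)
    (hs : HasSubgradientAt (fun y => c * φ y) s z) (hφ : LipschitzWith 1 φ) : ‖s‖ ≤ c := by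
  simpa [nnnorm_of_nonneg hc] using hs.norm_le ((lipschitzWith_smul c).comp hφ)

theorem hasSubgradientAt_const_mul_norm_zero {c : ℝ} {s : E} (hs : ‖s‖ ≤ c) :
    HasSubgradientAt (fun y => c * ‖y‖) s 0 := by
  intro y
  simpa using (real_inner_le_norm s y).trans (by gcongr)

def IsAdagradRun (f : E → ℝ) (G h : ℝ) (N : ℕ) (x g : ℕ → E) : Prop :=
  ∀ k, 1 ≤ k → k ≤ N → HasSubgradientAt f (g k) (x k) ∧
    x (k + 1) = x k - (h / √(G ^ 2 + ∑ i ∈ Icc 1 k, ‖g i‖ ^ 2)) • g k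

end Subgradient

theorem sqrt_sq_add_sum_norm_sq_of_norm_eq {E : Type*} [NormedAddCommGroup E] {G : ℝ}
    (hG : 0 ≤ G) {g : ℕ → E} {k : ℕ} (hg : ∀ i ∈ Icc 1 k, ‖g i‖ = G) :
    √(G ^ 2 + ∑ i ∈ Icc 1 k, ‖g i‖ ^ 2) = G * √(k + 1) := by
  rw [sum_congr rfl fun i hi => by rw [hg i hi], sum_const, Nat.card_Icc, add_tsub_cancel_right,
    nsmul_eq_mul, show G ^ 2 + k * G ^ 2 = G ^ 2 * (k + 1) by ring, sqrt_mul (sq_nonneg G),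
    sqrt_sq hG]

def AdagradGapAtLeast (G R h : ℝ) (N : ℕ) (L : ℝ) : Prop :=
  ∃ d, 1 ≤ d ∧ ∃ (f : EuclideanSpace ℝ (Fin d) → ℝ) (xstar : EuclideanSpace ℝ (Fin d))
    (x g : ℕ → EuclideanSpace ℝ (Fin d)),
    ConvexOn ℝ Set.univ f ∧ (∀ z s, HasSubgradientAt f s z → ‖s‖ ≤ G) ∧ (∀ y, f xstar ≤ f y) ∧
    ‖x 1 - xstar‖ ≤ R ∧ IsAdagradRun f G h N x g ∧ f (x (N + 1)) - f xstar ≥ L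

namespace AdagradGapAtLeast

variable {G R h L L' : ℝ} {N : ℕ}

theorem mono (hL : AdagradGapAtLeast G R h N L) (hL' : L' ≤ L) :
    AdagradGapAtLeast G R h N L' := by
  obtain ⟨d, hd, f, xstar, x, g, hconv, hsub, hmin, hstart, hrun, hgap⟩ := hL
  exact ⟨d, hd, f, xstar, x, g, hconv, hsub, hmin, hstart, hrun, hL'.trans hgap⟩

theorem max (hL : AdagradGapAtLeast G R h N L) (hL' : AdagradGapAtLeast G R h N L') :
    AdagradGapAtLeast G R h N (max L L') := by
  rcases le_total L L' with hle | hle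
  · rwa [max_eq_right hle]
  · rwa [max_eq_left hle]

end AdagradGapAtLeast

theorem adagradGapAtLeast_lazy {G R : ℝ} (hG : 0 < G) (hR : 0 ≤ R) (h : ℝ) {N : ℕ}
    (hN : 1 ≤ N) : AdagradGapAtLeast G R h N (G * h / √2) := by
  set v : EuclideanSpace ℝ (Fin 1) := EuclideanSpace.single 0 G
  have hv : ‖v‖ = G := by simp [v, hG.le]
  set c := h / (G * √2)
  refine ⟨1, le_rfl, fun y => G * ‖y‖, 0, fun k => if k ≤ N then 0 else -c • v,
    fun k => if k = N then v else 0, (convexOn_norm convex_univ).smul hG.le,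
    fun z s hs => hs.norm_le_of_const_mul hG.le lipschitzWith_one_norm,
    fun y => by simpa using mul_nonneg hG.le (norm_nonneg y), by simp [hN, hR],
    fun k hk hkN => ⟨?_, ?_⟩, ?_⟩
  · simp only [hkN, if_true]
    exact hasSubgradientAt_const_mul_norm_zero (by split_ifs <;> simp [hv, hG.le])
  · rcases hkN.lt_or_eq with hlt | rfl
    · simp [hkN, hlt.ne, Nat.succ_le_of_lt hlt]
    · have hsum : ∑ i ∈ Icc 1 k, ‖if i = k then v else 0‖ ^ 2 = G ^ 2 := by
        simp_rw [apply_ite (‖·‖ ^ 2), hv, norm_zero]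
        simp [hk]
      have hc : h / √(G ^ 2 + G ^ 2) = c := by
        rw [show G ^ 2 + G ^ 2 = G ^ 2 * 2 by ring, sqrt_mul (sq_nonneg G), sqrt_sq hG.le]
      simp [hsum, hc]
  · have hgap : G * ‖-c • v‖ = G * |h| / √2 := by
      rw [norm_smul, norm_neg, hv, norm_div, norm_mul, Real.norm_of_nonneg hG.le,
        Real.norm_of_nonneg (sqrt_nonneg 2), Real.norm_eq_abs]
      field_simp
    simp only [show ¬N + 1 ≤ N by omega, if_false, norm_zero, mul_zero, sub_zero, hgap]
    gcongr
    exact le_abs_self h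

theorem sub_div_smul_single_neg {ι : Type*} [DecidableEq ι] (y : EuclideanSpace ℝ ι) (j : ι)
    {c : ℝ} (hc : c ≠ 0) (a : ℝ) :
    y - (a / c) • EuclideanSpace.single j (-c) = y + EuclideanSpace.single j a := by
  ext i
  by_cases hi : i = j <;> simp [hi, hc]

section Coordinates

variable {ι : Type*} [Fintype ι] [Nonempty ι]

noncomputable def argminCoord (y : EuclideanSpace ℝ ι) : ι :=
  (Finite.exists_min fun j => y j).choose

theorem apply_argminCoord_le (y : EuclideanSpace ℝ ι) (j : ι) : y (argminCoord y) ≤ y j :=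
  (Finite.exists_min fun j => y j).choose_spec j

theorem card_mul_apply_argminCoord_le_sum (y : EuclideanSpace ℝ ι) :
    Fintype.card ι * y (argminCoord y) ≤ ∑ j, y j := by
  simpa using card_nsmul_le_sum univ (fun j => y j) _ fun j _ => apply_argminCoord_le y j

def supNegPart (y : EuclideanSpace ℝ ι) : ℝ :=
  univ.sup' univ_nonempty fun j => (y j)⁻

theorem neg_apply_le_supNegPart (y : EuclideanSpace ℝ ι) (j : ι) : -y j ≤ supNegPart y :=
  (neg_le_negPart _).trans (le_sup' (fun j => (y j)⁻) (mem_univ j))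

theorem supNegPart_nonneg (y : EuclideanSpace ℝ ι) : 0 ≤ supNegPart y :=
  (negPart_nonneg _).trans (le_sup' (fun j => (y j)⁻) (mem_univ (Classical.arbitrary ι)))

@[simp]
theorem supNegPart_zero : supNegPart (0 : EuclideanSpace ℝ ι) = 0 := by
  simp [supNegPart]

theorem supNegPart_eq_of_apply_argminCoord_nonpos {y : EuclideanSpace ℝ ι}
    (hy : y (argminCoord y) ≤ 0) : supNegPart y = -y (argminCoord y) :=
  le_antisymm
    (sup'_le _ _ fun j _ => sup_le (neg_le_neg (apply_argminCoord_le y j)) (neg_nonneg.2 hy))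
    (neg_apply_le_supNegPart y _)

theorem convexOn_supNegPart : ConvexOn ℝ Set.univ (supNegPart (ι := ι)) :=
  ConvexOn.finset_sup' univ_nonempty convex_univ fun j _ =>
    (-(EuclideanSpace.proj j : EuclideanSpace ℝ ι →L[ℝ] ℝ)).toLinearMap.convexOn
      convex_univ |>.sup (convexOn_const 0 convex_univ)

theorem lipschitzWith_supNegPart : LipschitzWith 1 (supNegPart (ι := ι)) :=
  LipschitzWith.finset_sup' univ_nonempty fun j _ => by
    have hj : LipschitzWith 1 fun y : EuclideanSpace ℝ ι => y j :=
      LipschitzWith.of_dist_le_mul fun x y => by simpa using PiLp.dist_apply_le x y j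
    have := lipschitzWith_negPart.comp hj
    rwa [mul_one] at this

variable [DecidableEq ι]

theorem hasSubgradientAt_const_mul_supNegPart {G : ℝ} (hG : 0 ≤ G) {y : EuclideanSpace ℝ ι}
    (hy : y (argminCoord y) ≤ 0) :
    HasSubgradientAt (fun z => G * supNegPart z)
      (EuclideanSpace.single (argminCoord y) (-G)) y := by
  intro z
  show G * supNegPart y + _ ≤ G * supNegPart z
  rw [supNegPart_eq_of_apply_argminCoord_nonpos hy, EuclideanSpace.inner_single_left]
  have := mul_le_mul_of_nonneg_left (neg_apply_le_supNegPart z (argminCoord y)) hG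
  simp only [PiLp.sub_apply, conj_trivial]
  linarith

noncomputable def greedyPath (x₀ : EuclideanSpace ℝ ι) (η : ℕ → ℝ) : ℕ → EuclideanSpace ℝ ι
  | 0 => x₀
  | m + 1 => greedyPath x₀ η m + EuclideanSpace.single (argminCoord (greedyPath x₀ η m)) (η m)

theorem sum_greedyPath (x₀ : EuclideanSpace ℝ ι) (η : ℕ → ℝ) (m : ℕ) :
    ∑ j, greedyPath x₀ η m j = ∑ j, x₀ j + ∑ i ∈ range m, η i := by
  induction m with
  | zero => simp [greedyPath]
  | succ m ih => simp [greedyPath, sum_add_distrib, ih, sum_range_succ, add_assoc]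

end Coordinates

theorem adagradGapAtLeast_greedy_of_dim {G R h : ℝ} (hG : 0 < G) (hh : 0 ≤ h) (N d : ℕ)
    [NeZero d] (hgap : 2 * h * √N / d ≤ R / √d) :
    AdagradGapAtLeast G R h N (G * (R / √d - 2 * h * √N / d)) := by
  have hd : (0 : ℝ) < d := Nat.cast_pos.2 (NeZero.pos d)
  have hsd : 0 < √d := sqrt_pos.2 hd
  have hR : 0 ≤ R := by
    simpa using (le_div_iff₀ hsd).1 ((div_nonneg (by positivity) hd.le).trans hgap)
  set x₀ : EuclideanSpace ℝ (Fin d) := WithLp.toLp 2 fun _ => -(R / √d)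
  set y := greedyPath x₀ fun m => h / √(m + 2)
  have hmin : ∀ m ≤ N, y m (argminCoord (y m)) ≤ -(R / √d - 2 * h * √N / d) := by
    intro m hm
    have hsteps := sum_range_div_sqrt_add_two_le hh hm
    have hsum := card_mul_apply_argminCoord_le_sum (y m)
    simp only [y, sum_greedyPath, Fintype.card_fin, x₀, sum_const, card_univ,
      nsmul_eq_mul] at hsum
    have : (d : ℝ) * y m (argminCoord (y m)) ≤ d * -(R / √d - 2 * h * √N / d) := by
      rw [mul_neg, mul_sub, mul_div_cancel₀ _ hd.ne']
      linarith
    exact le_of_mul_le_mul_left this hd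
  have hnonpos : ∀ m ≤ N, y m (argminCoord (y m)) ≤ 0 := fun m hm =>
    (hmin m hm).trans (neg_nonpos.2 (sub_nonneg.2 hgap))
  have hstart : ‖x₀‖ = R := by
    rw [EuclideanSpace.norm_eq]
    simp [x₀, abs_of_nonneg hR, abs_of_pos hsd, sqrt_sq (div_nonneg hR hsd.le),
      mul_div_cancel₀ _ hsd.ne']
  refine ⟨d, NeZero.one_le, fun z => G * supNegPart z, 0, fun k => y (k - 1),
    fun k => EuclideanSpace.single (argminCoord (y (k - 1))) (-G),
    convexOn_supNegPart.smul hG.le,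
    fun z s hs => hs.norm_le_of_const_mul hG.le lipschitzWith_supNegPart,
    fun z => by simpa using mul_nonneg hG.le (supNegPart_nonneg z),
    by simp [y, greedyPath, hstart],
    fun k hk hkN => ⟨hasSubgradientAt_const_mul_supNegPart hG.le (hnonpos _ (by omega)), ?_⟩, ?_⟩
  · obtain ⟨m, rfl⟩ : ∃ m, k = m + 1 := ⟨k - 1, by omega⟩
    rw [sqrt_sq_add_sum_norm_sq_of_norm_eq hG.le fun i _ => by simp [hG.le],
      show h / (G * √(↑(m + 1) + 1)) = h / √(m + 2) / G by push_cast; ring_nf]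
    exact (sub_div_smul_single_neg _ _ hG.ne' _).symm
  · simp only [Nat.add_sub_cancel, supNegPart_zero, mul_zero, sub_zero, ge_iff_le]
    calc G * (R / √d - 2 * h * √N / d) ≤ G * -y N (argminCoord (y N)) := by
          gcongr; linarith [hmin N le_rfl]
      _ ≤ G * supNegPart (y N) := by gcongr; exact neg_apply_le_supNegPart _ _

theorem adagradGapAtLeast_greedy {G R h κ : ℝ} (hG : 0 < G) (hR : 0 ≤ R) (hh : 0 ≤ h)
    (hκ : 0 < κ) (hκ₁ : κ ≤ 1) (N : ℕ) (hstep : h * √N * κ ≤ R) :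
    AdagradGapAtLeast G R h N (G * R * κ / 9) := by
  set d := ⌈9 / κ ^ 2⌉₊
  have hd₉ : 9 ≤ κ ^ 2 * d := by
    rw [← div_le_iff₀' (by positivity)]
    exact Nat.le_ceil _
  have hd₃₆ : κ ^ 2 * d ≤ 36 := by
    have hlt : (d : ℝ) < 9 / κ ^ 2 + 1 := Nat.ceil_lt_add_one (by positivity)
    have hexp : κ ^ 2 * (9 / κ ^ 2 + 1) = 9 + κ ^ 2 := by field_simp
    nlinarith
  have : NeZero d := ⟨by positivity⟩
  have hsd : 0 < √d := sqrt_pos.2 (by positivity)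
  -- with `t = κ √d ∈ [3, 6]`, the factor `1 / t - 2 / t²` is at least `1 / 9`
  have hkey : R * κ / 9 ≤ R / √d - 2 * R / (κ * d) := by
    set s := √(d : ℝ)
    have hds : (d : ℝ) = s ^ 2 := (sq_sqrt (by positivity)).symm
    rw [hds] at hd₉ hd₃₆ ⊢
    have ht₃ : 3 ≤ κ * s := by nlinarith [mul_pos hκ hsd]
    have ht₆ : κ * s ≤ 6 := by nlinarith [mul_pos hκ hsd]
    rw [← sub_nonneg, show R / s - 2 * R / (κ * s ^ 2) - R * κ / 9
        = R * ((κ * s - 3) * (6 - κ * s)) / (9 * κ * s ^ 2) by field_simp; ring]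
    exact div_nonneg (mul_nonneg hR (mul_nonneg (by linarith) (by linarith))) (by positivity)
  have hsteps : 2 * h * √N / d ≤ 2 * R / (κ * d) := by
    rw [div_le_div_iff₀ (by positivity) (by positivity)]
    nlinarith [hstep]
  refine (adagradGapAtLeast_greedy_of_dim hG hh N d (by nlinarith [mul_nonneg hR hκ.le])).mono ?_
  rw [mul_assoc, mul_div_assoc]
  gcongr
  linarith

theorem adagrad_last_iterate_lower_bound_general
    (G R γ : ℝ) (hG : 0 < G) (hR : 0 < R)
    (N : ℕ) (hN : 1 ≤ N) :
    ∃ (d : ℕ), 1 ≤ d ∧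
    ∃ (f : EuclideanSpace ℝ (Fin d) → ℝ)
      (xstar : EuclideanSpace ℝ (Fin d))
      (x g : ℕ → EuclideanSpace ℝ (Fin d)),
      ConvexOn ℝ Set.univ f ∧
      (∀ z s : EuclideanSpace ℝ (Fin d),
        (∀ y, f z + (inner ℝ s (y - z) : ℝ) ≤ f y) → ‖s‖ ≤ G) ∧
      (∀ y, f xstar ≤ f y) ∧
      ‖x 1 - xstar‖ ≤ R ∧
      (∀ k, 1 ≤ k → k ≤ N →
        (∀ y, f (x k) + (inner ℝ (g k) (y - x k) : ℝ) ≤ f y) ∧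
        x (k + 1) = x k -
          (R / (N : ℝ) ^ γ / Real.sqrt (G ^ 2 + ∑ i ∈ Icc 1 k, ‖g i‖ ^ 2)) • g k) ∧
      f (x (N + 1)) - f xstar ≥
        1 / 9 * max (G * R * (N : ℝ) ^ (-γ))
          (min (G * R * (N : ℝ) ^ (γ - 1 / 2)) (G * R)) := by
  have hN₀ : (0 : ℝ) < N := by exact_mod_cast hN
  have hNγ : 0 < (N : ℝ) ^ γ := rpow_pos_of_pos hN₀ γ
  set h := R / (N : ℝ) ^ γ
  set κ := min ((N : ℝ) ^ (γ - 1 / 2)) 1 with hκ_def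
  have hκ : 0 < κ := lt_min (rpow_pos_of_pos hN₀ _) one_pos
  have hstep : h * √N * κ ≤ R := by
    have hκN : κ * √N ≤ (N : ℝ) ^ γ := by
      rw [← le_div_iff₀ (sqrt_pos.2 hN₀), sqrt_eq_rpow, ← rpow_sub hN₀]
      exact min_le_left _ _
    calc h * √N * κ = R / (N : ℝ) ^ γ * (κ * √N) := by ring
      _ ≤ R / (N : ℝ) ^ γ * (N : ℝ) ^ γ := by gcongr
      _ = R := div_mul_cancel₀ R hNγ.ne'
  refine ((adagradGapAtLeast_lazy hG hR.le h hN).max (adagradGapAtLeast_greedy hG hR.le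
    (by positivity) hκ (min_le_right _ _) N hstep)).mono ?_
  rw [mul_max_of_nonneg _ _ (by norm_num)]
  apply max_le_max
  · calc 1 / 9 * (G * R * (N : ℝ) ^ (-γ)) = G * h / 9 := by rw [rpow_neg hN₀.le]; ring
      _ ≤ G * h / √2 := by gcongr; nlinarith [sq_sqrt (zero_le_two : (0 : ℝ) ≤ 2)]
  · have hmin : min (G * R * (N : ℝ) ^ (γ - 1 / 2)) (G * R) = G * R * κ := by
      rw [hκ_def, mul_min_of_nonneg _ _ (by positivity), mul_one]
    rw [hmin]
    linarith

/-- Theorem 2 (matching lower bound): for every `γ > 0`, `G, R > 0`, and `N ≥ 1`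
there is a dimension `d ≥ 1`, a convex `G`-Lipschitz instance, a minimizer `x*`,
a starting point with `‖x¹ − x*‖ ≤ R`, and valid subgradient choices, on which
AdaGrad with `h = R/N^γ` satisfies
`f(x^{N+1}) − f(x*) ≥ (1/9)·max{GR·N^{−γ}, min{GR·N^{γ−1/2}, GR}}`. -/
theorem adagrad_last_iterate_lower_bound
    (G R γ : ℝ) (hG : 0 < G) (hR : 0 < R) (hγ : 0 < γ)
    (N : ℕ) (hN : 1 ≤ N) :
    ∃ (d : ℕ), 1 ≤ d ∧
    ∃ (f : EuclideanSpace ℝ (Fin d) → ℝ)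
      (xstar : EuclideanSpace ℝ (Fin d))
      (x g : ℕ → EuclideanSpace ℝ (Fin d)),
      ConvexOn ℝ Set.univ f ∧
      (∀ z s : EuclideanSpace ℝ (Fin d),
        (∀ y, f z + (inner ℝ s (y - z) : ℝ) ≤ f y) → ‖s‖ ≤ G) ∧
      (∀ y, f xstar ≤ f y) ∧
      ‖x 1 - xstar‖ ≤ R ∧
      (∀ k, 1 ≤ k → k ≤ N →
        (∀ y, f (x k) + (inner ℝ (g k) (y - x k) : ℝ) ≤ f y) ∧
        x (k + 1) = x k -
          (R / (N : ℝ) ^ γ / Real.sqrt (G ^ 2 + ∑ i ∈ Icc 1 k, ‖g i‖ ^ 2)) • g k) ∧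
      f (x (N + 1)) - f xstar ≥
        1 / 9 * max (G * R * (N : ℝ) ^ (-γ))
          (min (G * R * (N : ℝ) ^ (γ - 1 / 2)) (G * R)) :=
  adagrad_last_iterate_lower_bound_general G R γ hG hR N hN
end
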